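/- arXiv:1802.01641 — 6 statements merged into one kernel-verified Lean document; each statement's English description precedes it below -/
import Mathlib

section
/- Let (Ω, 𝔉, ℙ) be a probability space, T ≥ 0, Θ > 0, and let E : Ω × [T, T+Θ] → ℝ be jointly measurable with 0 ≤ E(ω,u) ≤ M for some constant M and all (ω,u). Let f : ℝ → ℝ be twice continuously differentiable with f′ and f″ bounded and continuous. Define F : L²([T, T+Θ]) → ℝ by F(x) = 𝔼[f((1/Θ)∫_T^{T+Θ} x(u) E(·,u) du)]. Then F is twice Fréchet differentiable at every x ∈ L²([T, T+Θ]), with second derivative given by the symmetric bilinear form D²F(x)(h,k) = ∫_T^{T+Θ}∫_T^{T+Θ} h(v) k(w) · 𝔼[f″((1/Θ)∫_T^{T+Θ} x(u) E(·,u) du) · E(·,v) E(·,w)/Θ²] dv dw for h, k ∈ L²([T, T+Θ]). -/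
/-!
Writing `e ω := Θ⁻¹ E(ω, ·) ∈ L²`, the functional is `F(x) = 𝔼[f ⟪x, e⟫]` with `‖e ω‖` bounded
uniformly in `ω`. Hence every argument `⟪x + h, e ω⟫` of `f`, `f'`, `f''` stays in a fixed compact
interval, where `f'` and `f''` are uniformly continuous, so the first-order Taylor remainders of
`f` and `f'` at `⟪x, e ω⟫` are `o(‖h‖)` uniformly in `ω`. Integrating gives the two Fréchet
derivatives of `F`; Fubini turns `𝔼[f''(⟪x, e⟫) ⟪h, e⟫ ⟪k, e⟫]` into the stated double integral.
-/

open MeasureTheory ProbabilityTheory Real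

open Filter Topology Set
open scoped NNReal ENNReal InnerProductSpace

theorem ContDiff.exists_pos_abs_sub_sub_deriv_mul_le {g : ℝ → ℝ} (hg : ContDiff ℝ 1 g) (R : ℝ)
    {ε : ℝ} (hε : 0 < ε) :
    ∃ δ > 0, ∀ a t, |a| ≤ R → |t| ≤ δ → |g (a + t) - g a - deriv g a * t| ≤ ε * |t| := by
  obtain ⟨δ, hδ, hδε⟩ := Metric.uniformContinuousOn_iff_le.1
    ((isCompact_closedBall (0 : ℝ) (R + 1)).uniformContinuousOn_of_continuous
      (hg.continuous_deriv le_rfl).continuousOn) ε hε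
  refine ⟨min δ 1, by positivity, fun a t ha ht => ?_⟩
  have hderiv_close : ∀ s ∈ uIcc a (a + t), ‖deriv g s - deriv g a‖ ≤ ε := fun s hs => by
    have hsa : |s - a| ≤ min δ 1 :=
      (abs_sub_left_of_mem_uIcc hs).trans (by rwa [add_sub_cancel_left])
    refine hδε s ?_ a ?_ ?_
    · rw [mem_closedBall_zero_iff, Real.norm_eq_abs]
      linarith [abs_sub_abs_le_abs_sub s a, min_le_right δ 1]
    · rw [mem_closedBall_zero_iff, Real.norm_eq_abs]
      linarith
    · rw [Real.dist_eq]
      exact hsa.trans (min_le_left _ _)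
  have hmvt := (convex_uIcc a (a + t)).norm_image_sub_le_of_norm_hasDerivWithin_le
    (f := fun s => g s - deriv g a * s)
    (fun s _ => (((hg.differentiable one_ne_zero) s).hasDerivAt.sub
      ((hasDerivAt_id s).const_mul _)).hasDerivWithinAt.congr_deriv (by simp))
    hderiv_close left_mem_uIcc right_mem_uIcc
  rw [Real.norm_eq_abs, Real.norm_eq_abs, add_sub_cancel_left] at hmvt
  calc |g (a + t) - g a - deriv g a * t|
      = |g (a + t) - deriv g a * (a + t) - (g a - deriv g a * a)| := by ring_nf
    _ ≤ ε * |t| := hmvt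

section InnerIntegral

variable {Ω H : Type*} [NormedAddCommGroup H] [InnerProductSpace ℝ H] {e : Ω → H} {B : ℝ≥0}
  {g : ℝ → ℝ}

theorem abs_inner_le_of_norm_le (he : ∀ ω, ‖e ω‖ ≤ B) (y : H) (ω : Ω) :
    |⟪y, e ω⟫_ℝ| ≤ B * ‖y‖ :=
  (abs_real_inner_le_norm y (e ω)).trans (by rw [mul_comm]; gcongr; exact he ω)

theorem eventually_abs_comp_inner_sub_sub_le (he : ∀ ω, ‖e ω‖ ≤ B) (hg : ContDiff ℝ 1 g)
    (x : H) {ε : ℝ} (hε : 0 < ε) :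
    ∀ᶠ h in 𝓝 (0 : H), ∀ ω,
      |g ⟪x + h, e ω⟫_ℝ - g ⟪x, e ω⟫_ℝ - deriv g ⟪x, e ω⟫_ℝ * ⟪h, e ω⟫_ℝ| ≤ ε * ‖h‖ := by
  obtain ⟨δ, hδ, hδε⟩ := hg.exists_pos_abs_sub_sub_deriv_mul_le (B * ‖x‖) (ε := ε / (B + 1))
    (by positivity)
  filter_upwards [Metric.ball_mem_nhds (0 : H) (show 0 < δ / (B + 1) by positivity)] with h hh ω
  rw [mem_ball_zero_iff, lt_div_iff₀ (by positivity)] at hh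
  have hh_inner : |⟪h, e ω⟫_ℝ| ≤ (B + 1) * ‖h‖ := by
    nlinarith [abs_inner_le_of_norm_le he h ω, norm_nonneg h]
  rw [inner_add_left]
  calc _ ≤ ε / (B + 1) * |⟪h, e ω⟫_ℝ| :=
        hδε _ _ (abs_inner_le_of_norm_le he x ω) (by linarith)
    _ ≤ ε / (B + 1) * ((B + 1) * ‖h‖) := by gcongr
    _ = ε * ‖h‖ := by field_simp

variable [MeasurableSpace Ω] {P : Measure Ω}

theorem MeasureTheory.Integrable.mul_inner (he : ∀ ω, ‖e ω‖ ≤ B)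
    (hmeas : ∀ y : H, AEStronglyMeasurable (fun ω => ⟪y, e ω⟫_ℝ) P) {u : Ω → ℝ}
    (hu : Integrable u P) (h : H) : Integrable (fun ω => u ω * ⟪h, e ω⟫_ℝ) P :=
  hu.mul_bdd (hmeas h) (ae_of_all _ (abs_inner_le_of_norm_le he h))

theorem exists_clm_apply_eq_integral (he : ∀ ω, ‖e ω‖ ≤ B)
    (hmeas : ∀ y : H, AEStronglyMeasurable (fun ω => ⟪y, e ω⟫_ℝ) P) {u : Ω → ℝ}
    (hu : Integrable u P) :
    ∃ L : H →L[ℝ] ℝ, ∀ h, L h = ∫ ω, u ω * ⟪h, e ω⟫_ℝ ∂P := by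
  refine ⟨LinearMap.mkContinuous
    { toFun := fun h => ∫ ω, u ω * ⟪h, e ω⟫_ℝ ∂P
      map_add' := fun h h' => by
        simp only [inner_add_left, mul_add]
        exact integral_add (hu.mul_inner he hmeas h) (hu.mul_inner he hmeas h')
      map_smul' := fun c h => by
        simp only [real_inner_smul_left, mul_left_comm _ c]
        exact integral_const_mul c _ }
    ((∫ ω, |u ω| ∂P) * B) fun h => ?_, fun h => rfl⟩
  calc ‖∫ ω, u ω * ⟪h, e ω⟫_ℝ ∂P‖ ≤ ∫ ω, |u ω| * (B * ‖h‖) ∂P :=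
        norm_integral_le_of_norm_le (hu.abs.mul_const _) (ae_of_all _ fun ω => by
          rw [norm_mul]; gcongr; exacts [le_rfl, abs_inner_le_of_norm_le he h ω])
    _ = (∫ ω, |u ω| ∂P) * B * ‖h‖ := by rw [integral_mul_const, mul_assoc]

theorem exists_clm₂_apply_eq_integral (he : ∀ ω, ‖e ω‖ ≤ B)
    (hmeas : ∀ y : H, AEStronglyMeasurable (fun ω => ⟪y, e ω⟫_ℝ) P) {u : Ω → ℝ}
    (hu : Integrable u P) :
    ∃ L : H →L[ℝ] H →L[ℝ] ℝ, ∀ h k, L h k = ∫ ω, u ω * ⟪h, e ω⟫_ℝ * ⟪k, e ω⟫_ℝ ∂P := by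
  have hint : ∀ h k : H, Integrable (fun ω => u ω * ⟪h, e ω⟫_ℝ * ⟪k, e ω⟫_ℝ) P :=
    fun h k => (hu.mul_inner he hmeas h).mul_inner he hmeas k
  refine ⟨LinearMap.mkContinuous₂ (LinearMap.mk₂ ℝ
    (fun h k => ∫ ω, u ω * ⟪h, e ω⟫_ℝ * ⟪k, e ω⟫_ℝ ∂P)
    (fun h h' k => by
      simp only [inner_add_left, mul_add, add_mul]
      exact integral_add (hint h k) (hint h' k))
    (fun c h k => by
      simp only [real_inner_smul_left, smul_eq_mul, ← integral_const_mul]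
      congr 1 with ω
      ring)
    (fun h k k' => by
      simp only [inner_add_left, mul_add]
      exact integral_add (hint h k) (hint h k'))
    (fun c h k => by
      simp only [real_inner_smul_left, smul_eq_mul, ← integral_const_mul]
      congr 1 with ω
      ring))
    ((∫ ω, |u ω| ∂P) * B * B) fun h k => ?_, fun h k => rfl⟩
  calc ‖∫ ω, u ω * ⟪h, e ω⟫_ℝ * ⟪k, e ω⟫_ℝ ∂P‖
      ≤ ∫ ω, |u ω| * (B * ‖h‖) * (B * ‖k‖) ∂P :=
        norm_integral_le_of_norm_le ((hu.abs.mul_const _).mul_const _) (ae_of_all _ fun ω => by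
          rw [norm_mul, norm_mul]
          gcongr
          exacts [le_rfl, abs_inner_le_of_norm_le he h ω, abs_inner_le_of_norm_le he k ω])
    _ = (∫ ω, |u ω| ∂P) * B * B * ‖h‖ * ‖k‖ := by
        rw [integral_mul_const, integral_mul_const]
        ring

variable [IsFiniteMeasure P]

theorem integrable_comp_inner (he : ∀ ω, ‖e ω‖ ≤ B)
    (hmeas : ∀ y : H, AEStronglyMeasurable (fun ω => ⟪y, e ω⟫_ℝ) P) (hg : Continuous g) (y : H) :
    Integrable (fun ω => g ⟪y, e ω⟫_ℝ) P := by
  obtain ⟨D, hD⟩ := (isCompact_closedBall (0 : ℝ) (B * ‖y‖)).exists_bound_of_continuousOn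
    hg.continuousOn
  exact .of_bound (hg.comp_aestronglyMeasurable (hmeas y)) D
    (ae_of_all _ fun ω => hD _ (by simpa using abs_inner_le_of_norm_le he y ω))

theorem eventually_abs_integral_sub_sub_mul_le (he : ∀ ω, ‖e ω‖ ≤ B) (hg : ContDiff ℝ 1 g)
    (x : H) {ε : ℝ} (hε : 0 < ε) :
    ∀ᶠ h in 𝓝 (0 : H), ∀ (w : Ω → ℝ) (C : ℝ), 0 ≤ C → (∀ ω, |w ω| ≤ C) →
      |∫ ω, (g ⟪x + h, e ω⟫_ℝ - g ⟪x, e ω⟫_ℝ - deriv g ⟪x, e ω⟫_ℝ * ⟪h, e ω⟫_ℝ) * w ω ∂P|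
        ≤ ε * C * ‖h‖ := by
  filter_upwards [eventually_abs_comp_inner_sub_sub_le he hg x
    (show 0 < ε / (P.real univ + 1) by positivity)] with h hh w C hC hw
  rw [← Real.norm_eq_abs]
  refine (norm_integral_le_of_norm_le_const (C := ε / (P.real univ + 1) * ‖h‖ * C)
    (ae_of_all _ fun ω => ?_)).trans ?_
  · rw [Real.norm_eq_abs, abs_mul]
    gcongr
    exacts [hh ω, hw ω]
  · calc _ ≤ ε / (P.real univ + 1) * ‖h‖ * C * (P.real univ + 1) := by gcongr; linarith
      _ = ε * C * ‖h‖ := by field_simp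

theorem hasFDerivAt_integral_comp_inner (he : ∀ ω, ‖e ω‖ ≤ B)
    (hmeas : ∀ y : H, AEStronglyMeasurable (fun ω => ⟪y, e ω⟫_ℝ) P) (hg : ContDiff ℝ 1 g)
    {x : H} {L : H →L[ℝ] ℝ} (hL : ∀ h, L h = ∫ ω, deriv g ⟪x, e ω⟫_ℝ * ⟪h, e ω⟫_ℝ ∂P) :
    HasFDerivAt (fun y => ∫ ω, g ⟪y, e ω⟫_ℝ ∂P) L x := by
  rw [hasFDerivAt_iff_isLittleO_nhds_zero, Asymptotics.isLittleO_iff]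
  intro ε hε
  filter_upwards [eventually_abs_integral_sub_sub_mul_le (P := P) he hg x hε] with h hh
  have hint := integrable_comp_inner he hmeas hg.continuous
  have hrem : (∫ ω, g ⟪x + h, e ω⟫_ℝ ∂P) - (∫ ω, g ⟪x, e ω⟫_ℝ ∂P) - L h =
      ∫ ω, (g ⟪x + h, e ω⟫_ℝ - g ⟪x, e ω⟫_ℝ - deriv g ⟪x, e ω⟫_ℝ * ⟪h, e ω⟫_ℝ) * 1 ∂P := by
    rw [hL, ← integral_sub (hint _) (hint _), ← integral_sub ?_
      ((integrable_comp_inner he hmeas (hg.continuous_deriv le_rfl) x).mul_inner he hmeas h)]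
    · simp_rw [mul_one]
    · exact (hint _).sub (hint _)
  simpa [hrem] using hh 1 1 zero_le_one (by simp)

theorem hasFDerivAt_of_apply_eq_integral (he : ∀ ω, ‖e ω‖ ≤ B)
    (hmeas : ∀ y : H, AEStronglyMeasurable (fun ω => ⟪y, e ω⟫_ℝ) P) (hg : ContDiff ℝ 1 g)
    {F' : H → H →L[ℝ] ℝ} (hF' : ∀ y h, F' y h = ∫ ω, g ⟪y, e ω⟫_ℝ * ⟪h, e ω⟫_ℝ ∂P)
    {x : H} {L : H →L[ℝ] H →L[ℝ] ℝ}
    (hL : ∀ h k, L h k = ∫ ω, deriv g ⟪x, e ω⟫_ℝ * ⟪h, e ω⟫_ℝ * ⟪k, e ω⟫_ℝ ∂P) :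
    HasFDerivAt F' L x := by
  rw [hasFDerivAt_iff_isLittleO_nhds_zero, Asymptotics.isLittleO_iff]
  intro ε hε
  filter_upwards [eventually_abs_integral_sub_sub_mul_le (P := P) he hg x
    (show 0 < ε / (B + 1) by positivity)] with h hh
  refine ContinuousLinearMap.opNorm_le_bound _ (by positivity) fun k => ?_
  have hint := fun y => (integrable_comp_inner he hmeas hg.continuous y).mul_inner he hmeas k
  have hrem : (F' (x + h) - F' x - L h) k = ∫ ω, (g ⟪x + h, e ω⟫_ℝ - g ⟪x, e ω⟫_ℝ
      - deriv g ⟪x, e ω⟫_ℝ * ⟪h, e ω⟫_ℝ) * ⟪k, e ω⟫_ℝ ∂P := by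
    rw [sub_apply, sub_apply, hF', hF', hL, ← integral_sub (hint _) (hint _), ← integral_sub ?_
      (((integrable_comp_inner he hmeas (hg.continuous_deriv le_rfl) x).mul_inner he hmeas
        h).mul_inner he hmeas k)]
    · congr 1 with ω
      ring
    · exact (hint _).sub (hint _)
  rw [hrem, Real.norm_eq_abs]
  calc _ ≤ ε / (B + 1) * (B * ‖k‖) * ‖h‖ :=
        hh _ _ (by positivity) (abs_inner_le_of_norm_le he k)
    _ ≤ ε / (B + 1) * ((B + 1) * ‖k‖) * ‖h‖ := by gcongr; linarith
    _ = ε * ‖h‖ * ‖k‖ := by field_simp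

theorem exists_hasFDerivAt_integral_comp_inner (he : ∀ ω, ‖e ω‖ ≤ B)
    (hmeas : ∀ y : H, AEStronglyMeasurable (fun ω => ⟪y, e ω⟫_ℝ) P) {f : ℝ → ℝ}
    (hf : ContDiff ℝ 2 f) :
    ∃ F' : H → H →L[ℝ] ℝ, (∀ x, HasFDerivAt (fun y => ∫ ω, f ⟪y, e ω⟫_ℝ ∂P) (F' x) x) ∧
      ∀ x, ∃ F'' : H →L[ℝ] H →L[ℝ] ℝ, HasFDerivAt F' F'' x ∧
        ∀ h k, F'' h k = ∫ ω, deriv (deriv f) ⟪x, e ω⟫_ℝ * ⟪h, e ω⟫_ℝ * ⟪k, e ω⟫_ℝ ∂P := by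
  have hf' : ContDiff ℝ 1 (deriv f) := hf.deriv'
  choose F' hF' using fun x => exists_clm_apply_eq_integral he hmeas
    (integrable_comp_inner he hmeas hf'.continuous x)
  refine ⟨F', fun x => hasFDerivAt_integral_comp_inner he hmeas (hf.of_le one_le_two) (hF' x),
    fun x => ?_⟩
  obtain ⟨F'', hF''⟩ := exists_clm₂_apply_eq_integral he hmeas
    (integrable_comp_inner he hmeas (hf'.continuous_deriv le_rfl) x)
  exact ⟨F'', hasFDerivAt_of_apply_eq_integral he hmeas hf' hF' hF'', hF''⟩

end InnerIntegral

section L2Kernel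

variable {Ω α : Type*} [MeasurableSpace Ω] [MeasurableSpace α] {μ : Measure α}

theorem MeasureTheory.MemLp.inner_toLp_eq_integral {v : α → ℝ} (hv : MemLp v 2 μ)
    (z : Lp ℝ 2 μ) : ⟪z, hv.toLp v⟫_ℝ = ∫ u, z u * v u ∂μ := by
  rw [L2.inner_def]
  refine integral_congr_ae (hv.coeFn_toLp.mono fun u hu => ?_)
  simp [hu, mul_comm]

theorem aestronglyMeasurable_integral_mul [SFinite μ] {P : Measure Ω} {E : Ω → α → ℝ}
    (hE : Measurable (Function.uncurry E)) {z : α → ℝ} (hz : AEStronglyMeasurable z μ) :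
    AEStronglyMeasurable (fun ω => ∫ u, z u * E ω u ∂μ) P :=
  (hz.comp_snd.mul hE.aestronglyMeasurable).integral_prod_right'

theorem exists_norm_le_inner_eq_smul_integral [IsFiniteMeasure μ] (P : Measure Ω)
    {E : Ω → α → ℝ} (hE : Measurable (Function.uncurry E)) {M : ℝ}
    (hEM : ∀ᵐ u ∂μ, ∀ ω, |E ω u| ≤ M) (c : ℝ) :
    ∃ (e : Ω → Lp ℝ 2 μ) (B : ℝ≥0), (∀ ω, ‖e ω‖ ≤ B) ∧
      (∀ z, AEStronglyMeasurable (fun ω => ⟪z, e ω⟫_ℝ) P) ∧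
      ∀ z ω, ⟪z, e ω⟫_ℝ = c * ∫ u, z u * E ω u ∂μ := by
  have hbound : ∀ ω, ∀ᵐ u ∂μ, ‖E ω u‖ ≤ |M| := fun ω =>
    hEM.mono fun u hu => (hu ω).trans (le_abs_self M)
  have hmem : ∀ ω, MemLp (E ω) 2 μ := fun ω =>
    .of_bound hE.of_uncurry_left.aestronglyMeasurable _ (hbound ω)
  have hinner : ∀ (z : Lp ℝ 2 μ) ω, ⟪z, c • (hmem ω).toLp (E ω)⟫_ℝ = c * ∫ u, z u * E ω u ∂μ :=
    fun z ω => by rw [real_inner_smul_right, (hmem ω).inner_toLp_eq_integral]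
  refine ⟨fun ω => c • (hmem ω).toLp (E ω),
    ‖c‖₊ * (measureUnivNNReal μ ^ (2 : ℝ≥0∞).toReal⁻¹ * |M|).toNNReal, fun ω => ?_,
    fun z => ?_, hinner⟩
  · rw [norm_smul, NNReal.coe_mul, coe_nnnorm]
    gcongr
    refine (Lp.norm_le_of_ae_bound (abs_nonneg M) ?_).trans (Real.le_coe_toNNReal _)
    filter_upwards [(hmem ω).coeFn_toLp, hbound ω] with u hu hu'
    rwa [hu]
  · simpa only [hinner] using
      (aestronglyMeasurable_integral_mul hE (Lp.aestronglyMeasurable z)).const_mul c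

theorem integral_mul_integral_mul_integral_eq [SFinite μ] {P : Measure Ω} [SFinite P]
    {E : Ω → α → ℝ} (hE : Measurable (Function.uncurry E)) {M : ℝ}
    (hEM : ∀ᵐ u ∂μ, ∀ ω, |E ω u| ≤ M) {c : Ω → ℝ} (hc : Integrable c P) {h k : α → ℝ}
    (hh : Integrable h μ) (hk : Integrable k μ) :
    ∫ ω, c ω * (∫ v, h v * E ω v ∂μ) * (∫ w, k w * E ω w ∂μ) ∂P =
      ∫ v, ∫ w, h v * k w * ∫ ω, c ω * E ω v * E ω w ∂P ∂μ ∂μ := by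
  set Φ : Ω → α × α → ℝ := fun ω p => c ω * (h p.1 * k p.2) * (E ω p.1 * E ω p.2)
  have hEE : ∀ᵐ z ∂P.prod (μ.prod μ), ‖E z.1 z.2.1 * E z.1 z.2.2‖ ≤ M * M := by
    have hEM₂ : ∀ᵐ p ∂μ.prod μ, (∀ ω, |E ω p.1| ≤ M) ∧ ∀ ω, |E ω p.2| ≤ M :=
      (Measure.quasiMeasurePreserving_fst.ae hEM).and (Measure.quasiMeasurePreserving_snd.ae hEM)
    filter_upwards [Measure.quasiMeasurePreserving_snd.ae hEM₂] with z hz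
    rw [norm_mul]
    exact mul_le_mul (hz.1 z.1) (hz.2 z.1) (abs_nonneg _) ((abs_nonneg _).trans (hz.1 z.1))
  have hΦ : Integrable (Function.uncurry Φ) (P.prod (μ.prod μ)) :=
    (hc.mul_prod (hh.mul_prod hk)).mul_bdd
      ((hE.comp (measurable_fst.prodMk (measurable_fst.comp measurable_snd))).mul
        (hE.comp (measurable_fst.prodMk (measurable_snd.comp measurable_snd)))).aestronglyMeasurable
      hEE
  calc ∫ ω, c ω * (∫ v, h v * E ω v ∂μ) * (∫ w, k w * E ω w ∂μ) ∂P
      = ∫ ω, ∫ p, Φ ω p ∂μ.prod μ ∂P := by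
        congr 1 with ω
        rw [mul_assoc, ← integral_prod_mul, ← integral_const_mul]
        congr 1 with p
        ring
    _ = ∫ p, ∫ ω, Φ ω p ∂P ∂μ.prod μ := integral_integral_swap hΦ
    _ = ∫ v, ∫ w, ∫ ω, Φ ω (v, w) ∂P ∂μ ∂μ := integral_prod _ hΦ.integral_prod_right
    _ = ∫ v, ∫ w, h v * k w * ∫ ω, c ω * E ω v * E ω w ∂P ∂μ ∂μ := by
        congr 1 with v
        congr 1 with w
        rw [← integral_const_mul]
        congr 1 with ω
        ring

end L2Kernel

theorem second_frechet_deriv_vix_price_general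
    {Ω : Type*} [MeasurableSpace Ω] (P : Measure Ω) [IsProbabilityMeasure P]
    (T Θ : ℝ)
    (E : Ω → ℝ → ℝ) (M : ℝ)
    (hEmeas : Measurable (Function.uncurry E))
    (hE : ∀ ω u, u ∈ Set.Icc T (T + Θ) → 0 ≤ E ω u ∧ E ω u ≤ M)
    (f : ℝ → ℝ) (hf : ContDiff ℝ 2 f)
    (F : Lp ℝ 2 (volume.restrict (Set.Icc T (T + Θ))) → ℝ)
    (hF : ∀ x, F x =
      ∫ ω, f (Θ⁻¹ * ∫ u in Set.Icc T (T + Θ), (x : ℝ → ℝ) u * E ω u) ∂P) :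
    ∃ F' : Lp ℝ 2 (volume.restrict (Set.Icc T (T + Θ))) →
        (Lp ℝ 2 (volume.restrict (Set.Icc T (T + Θ))) →L[ℝ] ℝ),
      (∀ x, HasFDerivAt F (F' x) x) ∧
      ∀ x, ∃ F'' : Lp ℝ 2 (volume.restrict (Set.Icc T (T + Θ))) →L[ℝ]
          (Lp ℝ 2 (volume.restrict (Set.Icc T (T + Θ))) →L[ℝ] ℝ),
        HasFDerivAt F' F'' x ∧
        ∀ h k, F'' h k =
          ∫ v in Set.Icc T (T + Θ), ∫ w in Set.Icc T (T + Θ),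
            (h : ℝ → ℝ) v * (k : ℝ → ℝ) w *
              ∫ ω, deriv (deriv f)
                  (Θ⁻¹ * ∫ u in Set.Icc T (T + Θ), (x : ℝ → ℝ) u * E ω u)
                * E ω v * E ω w / Θ ^ 2 ∂P := by
  have hEM : ∀ᵐ u ∂volume.restrict (Set.Icc T (T + Θ)), ∀ ω, |E ω u| ≤ M :=
    (ae_restrict_mem measurableSet_Icc).mono fun u hu ω =>
      (abs_of_nonneg (hE ω u hu).1).trans_le (hE ω u hu).2
  obtain ⟨e, B, he, hmeas, he_inner⟩ :=
    exists_norm_le_inner_eq_smul_integral P hEmeas hEM Θ⁻¹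
  obtain ⟨F', hF', hF''⟩ := exists_hasFDerivAt_integral_comp_inner he hmeas hf
  have hF_eq : F = fun y => ∫ ω, f ⟪y, e ω⟫_ℝ ∂P := funext fun y => by simp only [hF, he_inner]
  refine ⟨F', hF_eq ▸ hF', fun x => ?_⟩
  obtain ⟨F'', hF''x, hF''_apply⟩ := hF'' x
  refine ⟨F'', hF''x, fun h k => ?_⟩
  have hc := (integrable_comp_inner he hmeas (hf.deriv'.continuous_deriv le_rfl) x).div_const
    (Θ ^ 2)
  calc F'' h k = ∫ ω, deriv (deriv f) ⟪x, e ω⟫_ℝ / Θ ^ 2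
        * (∫ v in Set.Icc T (T + Θ), h v * E ω v)
        * (∫ w in Set.Icc T (T + Θ), k w * E ω w) ∂P := by
        rw [hF''_apply]
        congr 1 with ω
        rw [he_inner h, he_inner k]
        ring
    _ = _ := integral_mul_integral_mul_integral_eq hEmeas hEM hc
        ((Lp.memLp h).integrable one_le_two) ((Lp.memLp k).integrable one_le_two)
    _ = _ := by simp only [he_inner, div_mul_eq_mul_div]

/-- Second-order Fréchet differentiability of the VIX-type option price functional
`F(x) = 𝔼[f((1/Θ)∫_T^{T+Θ} x(u) E(·,u) du)]` on `L²([T, T+Θ])`: there is a Fréchet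
derivative map `F'`, itself Fréchet differentiable, whose derivative (the second
derivative of `F`) is the symmetric bilinear form
`(h,k) ↦ ∫∫ h(v) k(w) 𝔼[f″((1/Θ)∫ x(u) E(·,u) du) E(·,v) E(·,w)/Θ²] dv dw`. -/
theorem second_frechet_deriv_vix_price
    {Ω : Type*} [MeasurableSpace Ω] (P : Measure Ω) [IsProbabilityMeasure P]
    (T Θ : ℝ) (hT : 0 ≤ T) (hΘ : 0 < Θ)
    (E : Ω → ℝ → ℝ) (M : ℝ)
    (hEmeas : Measurable (Function.uncurry E))
    (hE : ∀ ω u, u ∈ Set.Icc T (T + Θ) → 0 ≤ E ω u ∧ E ω u ≤ M)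
    (f : ℝ → ℝ) (hf : ContDiff ℝ 2 f)
    (hf'bdd : ∃ c, ∀ y, |deriv f y| ≤ c)
    (hf''bdd : ∃ c, ∀ y, |deriv (deriv f) y| ≤ c)
    (F : Lp ℝ 2 (volume.restrict (Set.Icc T (T + Θ))) → ℝ)
    (hF : ∀ x, F x =
      ∫ ω, f (Θ⁻¹ * ∫ u in Set.Icc T (T + Θ), (x : ℝ → ℝ) u * E ω u) ∂P) :
    ∃ F' : Lp ℝ 2 (volume.restrict (Set.Icc T (T + Θ))) →
        (Lp ℝ 2 (volume.restrict (Set.Icc T (T + Θ))) →L[ℝ] ℝ),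
      (∀ x, HasFDerivAt F (F' x) x) ∧
      ∀ x, ∃ F'' : Lp ℝ 2 (volume.restrict (Set.Icc T (T + Θ))) →L[ℝ]
          (Lp ℝ 2 (volume.restrict (Set.Icc T (T + Θ))) →L[ℝ] ℝ),
        HasFDerivAt F' F'' x ∧
        ∀ h k, F'' h k =
          ∫ v in Set.Icc T (T + Θ), ∫ w in Set.Icc T (T + Θ),
            (h : ℝ → ℝ) v * (k : ℝ → ℝ) w *
              ∫ ω, deriv (deriv f)
                  (Θ⁻¹ * ∫ u in Set.Icc T (T + Θ), (x : ℝ → ℝ) u * E ω u)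
                * E ω v * E ω w / Θ ^ 2 ∂P :=
  second_frechet_deriv_vix_price_general P T Θ E M hEmeas hE f hf F hF
end

section
/- Let H ∈ (0, 1/2]. There exists a constant C, depending only on H, such that for all real numbers t ≤ T ≤ t₁ < t₂: (∫_t^T ((t₂−s)^{H−1/2} − (t₁−s)^{H−1/2})² ds)^{1/2} ≤ C (t₂−t₁)(t₂−T)^{H−1}. -/
/-!
Put `u = t₁ - s`, `Δ = t₂ - t₁` and `α = H - 1/2 ∈ (-1/2, 0]`; the integrand becomes
`((u + Δ)^α - u^α)²` on `u > t₁ - T`. For `u < Δ` it is at most `u^(2α)`, integrable at `0`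
because `2α > -1`; for `u ≥ Δ` the mean value theorem bounds it by `α²Δ²u^(2α-2)`, integrable at
infinity because `2α - 2 < -1`. Both pieces integrate to `O(Δ² m^(2α-1))` with
`m = max (t₁ - T) Δ ≥ (t₂ - T)/2`, and `2α - 1 = 2(H - 1)`.
-/

open Real MeasureTheory Set

variable {α Δ u : ℝ}

lemma sq_rpow_add_sub_rpow_le_rpow (hα : α ≤ 0) (hu : 0 < u) (hΔ : 0 ≤ Δ) :
    ((u + Δ) ^ α - u ^ α) ^ 2 ≤ u ^ (2 * α) := by
  have hle : (u + Δ) ^ α ≤ u ^ α := rpow_le_rpow_of_nonpos hu (by linarith) hα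
  have hnonneg : 0 ≤ (u + Δ) ^ α := rpow_nonneg (by linarith) α
  rw [show 2 * α = α * (2 : ℕ) by push_cast; ring, rpow_mul_natCast hu.le]
  nlinarith

lemma sq_rpow_add_sub_rpow_le_mul_rpow (hα : α ≤ 1) (hu : 0 < u) (hΔ : 0 ≤ Δ) :
    ((u + Δ) ^ α - u ^ α) ^ 2 ≤ α ^ 2 * Δ ^ 2 * u ^ (2 * α - 2) := by
  have hlip : ‖(u + Δ) ^ α - u ^ α‖ ≤ |α| * u ^ (α - 1) * ‖u + Δ - u‖ := by
    refine (convex_Icc u (u + Δ)).norm_image_sub_le_of_norm_hasDerivWithin_le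
      (fun x hx => (hasDerivAt_rpow_const (.inl (hu.trans_le hx.1).ne')).hasDerivWithinAt)
      (fun x hx => ?_) (left_mem_Icc.2 (by linarith)) (right_mem_Icc.2 (by linarith))
    rw [norm_mul, Real.norm_eq_abs, Real.norm_of_nonneg (rpow_nonneg (hu.le.trans hx.1) _)]
    exact mul_le_mul_of_nonneg_left (rpow_le_rpow_of_nonpos hu hx.1 (by linarith)) (abs_nonneg α)
  rw [add_sub_cancel_left, Real.norm_eq_abs, Real.norm_of_nonneg hΔ] at hlip
  calc ((u + Δ) ^ α - u ^ α) ^ 2 = |(u + Δ) ^ α - u ^ α| ^ 2 := (sq_abs _).symm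
    _ ≤ (|α| * u ^ (α - 1) * Δ) ^ 2 := pow_le_pow_left₀ (abs_nonneg _) hlip 2
    _ = α ^ 2 * Δ ^ 2 * u ^ (2 * α - 2) := by
      rw [show 2 * α - 2 = (α - 1) * (2 : ℕ) by push_cast; ring, rpow_mul_natCast hu.le]
      ring_nf
      rw [sq_abs]

lemma rpow_le_two_rpow_neg_mul_rpow {p x c : ℝ} (hp : p ≤ 0) (hx : 0 < x) (hxc : x ≤ 2 * c) :
    c ^ p ≤ 2 ^ (-p) * x ^ p := by
  calc c ^ p ≤ (x / 2) ^ p := rpow_le_rpow_of_nonpos (by positivity) (by linarith) hp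
    _ = 2 ^ (-p) * x ^ p := by
      rw [div_rpow hx.le zero_le_two, rpow_neg zero_le_two, div_eq_inv_mul]

lemma integrableOn_and_setIntegral_le_of_le {X : Type*} [MeasurableSpace X] {μ : Measure X}
    {f g : X → ℝ} {s : Set X} (hs : MeasurableSet s) (hf : Measurable f)
    (hg : IntegrableOn g s μ) (hf0 : ∀ x ∈ s, 0 ≤ f x) (hfg : ∀ x ∈ s, f x ≤ g x) :
    IntegrableOn f s μ ∧ ∫ x in s, f x ∂μ ≤ ∫ x in s, g x ∂μ := by
  have hf0' : ∀ᵐ x ∂μ.restrict s, 0 ≤ f x := (ae_restrict_iff' hs).2 (.of_forall hf0)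
  have hfg' : ∀ᵐ x ∂μ.restrict s, f x ≤ g x := (ae_restrict_iff' hs).2 (.of_forall hfg)
  refine ⟨hg.mono' hf.aestronglyMeasurable ?_, integral_mono_of_nonneg hf0' hg hfg'⟩
  filter_upwards [hf0', hfg'] with x h0 h1
  rwa [Real.norm_of_nonneg h0]

lemma measurable_sq_rpow_add_sub_rpow : Measurable fun u : ℝ => ((u + Δ) ^ α - u ^ α) ^ 2 := by
  fun_prop

lemma integrableOn_and_setIntegral_Ioc_zero_sq_rpow_add_sub_rpow_le (hα₀ : -1 / 2 < α)
    (hα : α ≤ 0) (hΔ : 0 ≤ Δ) {b : ℝ} (hb : 0 ≤ b) :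
    IntegrableOn (fun u => ((u + Δ) ^ α - u ^ α) ^ 2) (Ioc 0 b) ∧
      ∫ u in Ioc 0 b, ((u + Δ) ^ α - u ^ α) ^ 2 ≤ b ^ (2 * α + 1) / (2 * α + 1) := by
  have hexp : -1 < 2 * α := by linarith
  have hint : ∫ u in Ioc 0 b, u ^ (2 * α) = b ^ (2 * α + 1) / (2 * α + 1) := by
    rw [← intervalIntegral.integral_of_le hb, integral_rpow (.inl hexp),
      zero_rpow (by linarith), sub_zero]
  rw [← hint]
  exact integrableOn_and_setIntegral_le_of_le measurableSet_Ioc measurable_sq_rpow_add_sub_rpow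
    (intervalIntegral.intervalIntegrable_rpow' hexp).1 (fun _ _ => sq_nonneg _)
    (fun u hu => sq_rpow_add_sub_rpow_le_rpow hα hu.1 hΔ)

lemma integrableOn_and_setIntegral_Ioi_sq_rpow_add_sub_rpow_le (hα : α < 1 / 2) (hΔ : 0 ≤ Δ)
    {c : ℝ} (hc : 0 < c) :
    IntegrableOn (fun u => ((u + Δ) ^ α - u ^ α) ^ 2) (Ioi c) ∧
      ∫ u in Ioi c, ((u + Δ) ^ α - u ^ α) ^ 2 ≤
        α ^ 2 * Δ ^ 2 * c ^ (2 * α - 1) / (1 - 2 * α) := by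
  have hexp : 2 * α - 2 < -1 := by linarith
  have hint : ∫ u in Ioi c, α ^ 2 * Δ ^ 2 * u ^ (2 * α - 2)
      = α ^ 2 * Δ ^ 2 * c ^ (2 * α - 1) / (1 - 2 * α) := by
    rw [integral_const_mul, integral_Ioi_rpow_of_lt hexp hc,
      show 2 * α - 2 + 1 = 2 * α - 1 by ring, neg_div, ← div_neg, neg_sub]
    ring
  rw [← hint]
  exact integrableOn_and_setIntegral_le_of_le measurableSet_Ioi measurable_sq_rpow_add_sub_rpow
    ((integrableOn_Ioi_rpow_of_lt hexp hc).const_mul _) (fun _ _ => sq_nonneg _)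
    (fun u hu => sq_rpow_add_sub_rpow_le_mul_rpow (by linarith) (hc.trans hu) hΔ)

lemma integrableOn_and_setIntegral_Ioi_sq_rpow_add_sub_rpow_le_of_le (hα₀ : -1 / 2 < α)
    (hα : α ≤ 0) (hΔ : 0 < Δ) {a : ℝ} (ha : 0 ≤ a) (haΔ : a ≤ Δ) :
    IntegrableOn (fun u => ((u + Δ) ^ α - u ^ α) ^ 2) (Ioi a) ∧
      ∫ u in Ioi a, ((u + Δ) ^ α - u ^ α) ^ 2 ≤
        (1 / (2 * α + 1) + α ^ 2 / (1 - 2 * α)) * Δ ^ 2 * Δ ^ (2 * α - 1) := by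
  obtain ⟨hnearInt, hnear⟩ :=
    integrableOn_and_setIntegral_Ioc_zero_sq_rpow_add_sub_rpow_le hα₀ hα hΔ.le hΔ.le
  obtain ⟨hfarInt, hfar⟩ :=
    integrableOn_and_setIntegral_Ioi_sq_rpow_add_sub_rpow_le (α := α) (by linarith) hΔ.le hΔ
  have hIoc : Ioc a Δ ⊆ Ioc 0 Δ := Ioc_subset_Ioc_left ha
  have hnear' : ∫ u in Ioc a Δ, ((u + Δ) ^ α - u ^ α) ^ 2 ≤ Δ ^ (2 * α + 1) / (2 * α + 1) :=
    (setIntegral_mono_set hnearInt (.of_forall fun _ => sq_nonneg _) hIoc.eventuallyLE).trans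
      hnear
  have hpow : Δ ^ (2 * α + 1) = Δ ^ 2 * Δ ^ (2 * α - 1) := by
    rw [show 2 * α + 1 = 2 * α - 1 + (2 : ℕ) by push_cast; ring, rpow_add_natCast hΔ.ne',
      mul_comm]
  rw [← Ioc_union_Ioi_eq_Ioi haΔ]
  refine ⟨(hnearInt.mono_set hIoc).union hfarInt, ?_⟩
  rw [setIntegral_union (Ioc_disjoint_Ioi le_rfl) measurableSet_Ioi (hnearInt.mono_set hIoc)
    hfarInt]
  calc _ ≤ Δ ^ (2 * α + 1) / (2 * α + 1) + α ^ 2 * Δ ^ 2 * Δ ^ (2 * α - 1) / (1 - 2 * α) :=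
        add_le_add hnear' hfar
    _ = _ := by rw [hpow]; ring

lemma integrableOn_and_setIntegral_Ioi_sq_rpow_add_sub_rpow_le_add_rpow (hα₀ : -1 / 2 < α)
    (hα : α ≤ 0) (hΔ : 0 < Δ) {a : ℝ} (ha : 0 ≤ a) :
    IntegrableOn (fun u => ((u + Δ) ^ α - u ^ α) ^ 2) (Ioi a) ∧
      ∫ u in Ioi a, ((u + Δ) ^ α - u ^ α) ^ 2 ≤
        2 ^ (1 - 2 * α) * (1 / (2 * α + 1) + α ^ 2 / (1 - 2 * α)) * Δ ^ 2 *
          (a + Δ) ^ (2 * α - 1) := by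
  have hsub : 0 < 1 - 2 * α := by linarith
  have hadd : 0 < 2 * α + 1 := by linarith
  obtain ⟨m, ham, hint, hle⟩ : ∃ m, a + Δ ≤ 2 * m ∧
      IntegrableOn (fun u => ((u + Δ) ^ α - u ^ α) ^ 2) (Ioi a) ∧
      ∫ u in Ioi a, ((u + Δ) ^ α - u ^ α) ^ 2 ≤
        (1 / (2 * α + 1) + α ^ 2 / (1 - 2 * α)) * Δ ^ 2 * m ^ (2 * α - 1) := by
    rcases le_or_gt Δ a with hΔa | haΔ
    · obtain ⟨hint, hle⟩ := integrableOn_and_setIntegral_Ioi_sq_rpow_add_sub_rpow_le (α := α)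
        (by linarith) hΔ.le (hΔ.trans_le hΔa)
      refine ⟨a, by linarith, hint, hle.trans ?_⟩
      calc α ^ 2 * Δ ^ 2 * a ^ (2 * α - 1) / (1 - 2 * α)
          = α ^ 2 / (1 - 2 * α) * Δ ^ 2 * a ^ (2 * α - 1) := by ring
        _ ≤ _ := by gcongr; exact le_add_of_nonneg_left (by positivity)
    · exact ⟨Δ, by linarith,
        integrableOn_and_setIntegral_Ioi_sq_rpow_add_sub_rpow_le_of_le hα₀ hα hΔ ha haΔ.le⟩
  have hscale := rpow_le_two_rpow_neg_mul_rpow (p := 2 * α - 1) (by linarith) (by linarith) ham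
  rw [neg_sub] at hscale
  refine ⟨hint, hle.trans ?_⟩
  calc _ ≤ (1 / (2 * α + 1) + α ^ 2 / (1 - 2 * α)) * Δ ^ 2 *
        (2 ^ (1 - 2 * α) * (a + Δ) ^ (2 * α - 1)) := by gcongr
    _ = _ := by ring

lemma setIntegral_Icc_comp_sub_left (f : ℝ → ℝ) (c : ℝ) {a b : ℝ} (hab : a ≤ b) :
    ∫ s in Icc a b, f (c - s) = ∫ u in Ioc (c - b) (c - a), f u := by
  rw [integral_Icc_eq_integral_Ioc, ← intervalIntegral.integral_of_le hab,
    intervalIntegral.integral_comp_sub_left, intervalIntegral.integral_of_le (by linarith)]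

/-- Rectangle-scheme kernel estimate for the rough Bergomi kernel
`g(t,s) = (t−s)^{H−1/2}`: for `H ∈ (0,1/2]` there is a constant `C = C(H)` such that
for all `t ≤ T ≤ t₁ < t₂`,
`(∫_t^T ((t₂−s)^{H−1/2} − (t₁−s)^{H−1/2})² ds)^{1/2} ≤ C (t₂−t₁)(t₂−T)^{H−1}`. -/
theorem rough_bergomi_rectangle_kernel_estimate
    (H : ℝ) (hH0 : 0 < H) (hH : H ≤ 1 / 2) :
    ∃ C : ℝ, ∀ t T t₁ t₂ : ℝ, t ≤ T → T ≤ t₁ → t₁ < t₂ →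
      Real.sqrt (∫ s in Set.Icc t T,
          ((t₂ - s) ^ (H - 1 / 2) - (t₁ - s) ^ (H - 1 / 2)) ^ 2)
        ≤ C * (t₂ - t₁) * (t₂ - T) ^ (H - 1) := by
  set α := H - 1 / 2 with hα
  set K := 2 ^ (1 - 2 * α) * (1 / (2 * α + 1) + α ^ 2 / (1 - 2 * α))
  refine ⟨√K, fun t T t₁ t₂ htT hTt₁ ht₁t₂ => ?_⟩
  obtain ⟨hint, hle⟩ := integrableOn_and_setIntegral_Ioi_sq_rpow_add_sub_rpow_le_add_rpow
    (α := α) (by linarith) (by linarith) (sub_pos.2 ht₁t₂) (sub_nonneg.2 hTt₁)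
  have hcov : ∫ s in Icc t T, ((t₂ - s) ^ α - (t₁ - s) ^ α) ^ 2
      = ∫ u in Ioc (t₁ - T) (t₁ - t), ((u + (t₂ - t₁)) ^ α - u ^ α) ^ 2 := by
    rw [← setIntegral_Icc_comp_sub_left _ t₁ htT]
    simp only [sub_add_sub_cancel']
  have hmono := setIntegral_mono_set hint (.of_forall fun _ => sq_nonneg _)
    (Ioc_subset_Ioi_self : Ioc (t₁ - T) (t₁ - t) ⊆ Ioi (t₁ - T)).eventuallyLE
  have hpow : (t₂ - T) ^ (2 * α - 1) = ((t₂ - T) ^ (H - 1)) ^ 2 := by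
    rw [← rpow_mul_natCast (by linarith)]
    congr 1
    push_cast
    ring
  rw [hcov]
  calc _ ≤ √(K * (t₂ - t₁) ^ 2 * (t₁ - T + (t₂ - t₁)) ^ (2 * α - 1)) :=
        sqrt_le_sqrt (hmono.trans hle)
    _ = √K * (t₂ - t₁) * (t₂ - T) ^ (H - 1) := by
      rw [sub_add_sub_cancel', hpow, mul_assoc, ← mul_pow, sqrt_mul' _ (sq_nonneg _),
        sqrt_sq (mul_nonneg (by linarith) (rpow_nonneg (by linarith) _)), mul_assoc]
end

section
/- Let k, δ ≥ 0, let μ be a nonnegative measure on (0,∞) with ∫_0^∞ (z∧1) μ(dz) < ∞, and define R(u) = −ku + (δ²/2)u² + ∫_0^∞ (e^{zu} − 1) μ(dz) for u ≥ 0. Let m be a nonnegative measure on (0,∞) with ∫_0^∞ (z∧1) m(dz) < ∞, let θ ≥ 0 and define F(u) = kθu + ∫_0^∞ (e^{zu} − 1) m(dz). Let T > 0, let G : [0,T] → [0,∞) be continuous and nondecreasing with G(0) = 0, and suppose there exists A > 0 such that ∫_1^∞ z e^{zA} (μ + m)(dz) < ∞ and 2G(T) + T·max(0, R(A)) ≤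 A. Then there exists a continuous function ψ : [0,T] → ℝ satisfying the integral equation ψ(t) = 2G(t) + ∫_0^t R(ψ(s)) ds with 0 ≤ ψ(t) ≤ A for all t ∈ [0,T], and the function φ(t) := ∫_0^t F(ψ(s)) ds satisfies 0 ≤ φ(t) ≤ T·F(A) for all t ∈ [0,T]. -/
open MeasureTheory intervalIntegral Real

/-- The function `R(u) = −ku + (δ²/2)u² + ∫_0^∞ (e^{zu} − 1) μ(dz)` associated with a
positive affine process. -/
noncomputable def affineR (k δ : ℝ) (μ : Measure ℝ) (u : ℝ) : ℝ :=
  -(k * u) + δ ^ 2 / 2 * u ^ 2 + ∫ z in Set.Ioi (0:ℝ), (Real.exp (z * u) - 1) ∂μ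

/-- The function `F(u) = kθu + ∫_0^∞ (e^{zu} − 1) m(dz)` associated with a positive
affine process. -/
noncomputable def affineF (k θ : ℝ) (m : Measure ℝ) (u : ℝ) : ℝ :=
  k * θ * u + ∫ z in Set.Ioi (0:ℝ), (Real.exp (z * u) - 1) ∂m

/-!
Clamping `R` outside `[0, A]` makes it bounded and globally Lipschitz, so after the substitution
`α = ψ - 2G` Picard–Lindelöf solves the clamped equation on `[0, T]`. The solution stays in
`[0, A]`, where clamping changes nothing: it cannot become negative because the clamped `R` vanishes
on `(-∞, 0]` while `G` is nondecreasing, and it cannot exceed `A` because convexity of `R` with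
`R(0) = 0` gives `R ≤ max(0, R(A))` on `[0, A]`, and `2G(T) + T·max(0, R(A)) ≤ A`. The bounds on
`φ` follow from `0 ≤ F ≤ F(A)` on `[0, A]`.
-/

open Set

lemma exp_sub_exp_le_exp_mul_sub {a b c : ℝ} (hab : a ≤ b) (hbc : b ≤ c) :
    exp b - exp a ≤ exp c * (b - a) := by
  have h : exp a = exp b * exp (a - b) := by rw [← exp_add]; ring_nf
  nlinarith [add_one_le_exp (a - b), exp_le_exp.2 hbc, exp_pos b]

lemma abs_exp_mul_sub_exp_mul_le {z u v A : ℝ} (hz : 0 ≤ z) (hu : u ≤ A) (hv : v ≤ A) :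
    |exp (z * u) - exp (z * v)| ≤ z * exp (z * A) * |u - v| := by
  wlog huv : u ≤ v generalizing u v
  · rw [abs_sub_comm, abs_sub_comm u]; exact this hv hu (le_of_not_ge huv)
  have hzuv : z * u ≤ z * v := mul_le_mul_of_nonneg_left huv hz
  rw [abs_sub_comm, abs_of_nonneg (sub_nonneg.2 (exp_le_exp.2 hzuv)),
    abs_sub_comm, abs_of_nonneg (sub_nonneg.2 huv)]
  have := exp_sub_exp_le_exp_mul_sub hzuv (mul_le_mul_of_nonneg_left hv hz)
  linarith

lemma exp_mul_sub_one_le_div_mul {z c A : ℝ} (hA : 0 < A) (hc : 0 ≤ c) (hcA : c ≤ A) :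
    exp (z * c) - 1 ≤ c / A * (exp (z * A) - 1) := by
  have hcA₁ : c / A ≤ 1 := (div_le_one hA).2 hcA
  have h := convexOn_exp.2 (mem_univ 0) (mem_univ (z * A)) (sub_nonneg.2 hcA₁)
    (div_nonneg hc hA.le) (sub_add_cancel 1 (c / A))
  simp only [smul_eq_mul, mul_zero, zero_add, exp_zero, mul_one] at h
  rw [show c / A * (z * A) = z * c by field_simp] at h
  linarith

noncomputable def jumpIntegral (ν : Measure ℝ) (u : ℝ) : ℝ :=
  ∫ z in Ioi (0:ℝ), (exp (z * u) - 1) ∂ν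

lemma affineR_eq (k δ : ℝ) (μ : Measure ℝ) (u : ℝ) :
    affineR k δ μ u = -(k * u) + δ ^ 2 / 2 * u ^ 2 + jumpIntegral μ u := rfl

lemma jumpIntegral_nonneg (ν : Measure ℝ) {u : ℝ} (hu : 0 ≤ u) : 0 ≤ jumpIntegral ν u :=
  setIntegral_nonneg measurableSet_Ioi fun _ hz =>
    sub_nonneg.2 (one_le_exp (mul_nonneg (le_of_lt hz) hu))

section JumpIntegral

variable {ν : Measure ℝ} {A u v : ℝ}

lemma integrableOn_mul_exp_Ioi_zero (h₀ : IntegrableOn (fun z => min z 1) (Ioi 0) ν)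
    (h₁ : IntegrableOn (fun z => z * exp (z * A)) (Ioi 1) ν) :
    IntegrableOn (fun z => z * exp (z * A)) (Ioi 0) ν := by
  rw [← Ioc_union_Ioi_eq_Ioi zero_le_one]
  refine IntegrableOn.union ?_ h₁
  refine ((h₀.mono_set Ioc_subset_Ioi_self).const_mul (exp |A|)).mono'
    (by fun_prop : Continuous fun z : ℝ => z * exp (z * A)).aestronglyMeasurable.restrict ?_
  filter_upwards [ae_restrict_mem measurableSet_Ioc] with z ⟨hz0, hz1⟩
  rw [norm_of_nonneg (by positivity), min_eq_left hz1]
  have : z * A ≤ |A| := by nlinarith [le_abs_self A, abs_nonneg A]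
  nlinarith [exp_le_exp.2 this]

variable (hν : IntegrableOn (fun z => z * exp (z * A)) (Ioi 0) ν)
include hν

lemma integrableOn_exp_mul_sub_one (hA : 0 ≤ A) (hu : u ≤ A) :
    IntegrableOn (fun z => exp (z * u) - 1) (Ioi 0) ν := by
  refine (hν.mul_const |u|).mono' (by fun_prop : Continuous fun z : ℝ =>
    exp (z * u) - 1).aestronglyMeasurable.restrict ?_
  filter_upwards [ae_restrict_mem measurableSet_Ioi] with z hz
  simpa using abs_exp_mul_sub_exp_mul_le (le_of_lt hz) hu hA

lemma abs_jumpIntegral_sub_le (hA : 0 ≤ A) (hu : u ≤ A) (hv : v ≤ A) :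
    |jumpIntegral ν u - jumpIntegral ν v|
      ≤ (∫ z in Ioi (0:ℝ), z * exp (z * A) ∂ν) * |u - v| := by
  have hiu := integrableOn_exp_mul_sub_one hν hA hu
  have hiv := integrableOn_exp_mul_sub_one hν hA hv
  rw [jumpIntegral, jumpIntegral, ← integral_sub hiu hiv, ← MeasureTheory.integral_mul_const]
  refine MeasureTheory.abs_integral_le_integral_abs.trans
    (setIntegral_mono_on (hiu.sub hiv).abs (hν.mul_const _) measurableSet_Ioi fun z hz => ?_)
  simpa using abs_exp_mul_sub_exp_mul_le (le_of_lt hz) hu hv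

lemma monotoneOn_jumpIntegral (hA : 0 ≤ A) : MonotoneOn (jumpIntegral ν) (Iic A) :=
  fun _ hu _ hv huv => setIntegral_mono_on (integrableOn_exp_mul_sub_one hν hA hu)
    (integrableOn_exp_mul_sub_one hν hA hv) measurableSet_Ioi fun _ hz =>
      sub_le_sub_right (exp_le_exp.2 (mul_le_mul_of_nonneg_left huv (le_of_lt hz))) 1

lemma jumpIntegral_le_div_mul (hA : 0 < A) {c : ℝ} (hc : 0 ≤ c) (hcA : c ≤ A) :
    jumpIntegral ν c ≤ c / A * jumpIntegral ν A := by
  rw [jumpIntegral, jumpIntegral, ← MeasureTheory.integral_const_mul]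
  exact setIntegral_mono_on (integrableOn_exp_mul_sub_one hν hA.le hcA)
    ((integrableOn_exp_mul_sub_one hν hA.le le_rfl).const_mul _) measurableSet_Ioi
    fun _ _ => exp_mul_sub_one_le_div_mul hA hc hcA

end JumpIntegral

section AffineR

variable {k δ A : ℝ} {μ : Measure ℝ}

lemma affineR_zero : affineR k δ μ 0 = 0 := by simp [affineR]

variable (hμ : IntegrableOn (fun z => z * exp (z * A)) (Ioi 0) μ)
include hμ

lemma lipschitzOnWith_affineR (hA : 0 ≤ A) :
    LipschitzOnWith (|k| + δ ^ 2 * A + ∫ z in Ioi (0:ℝ), z * exp (z * A) ∂μ).toNNReal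
      (affineR k δ μ) (Icc 0 A) := by
  refine LipschitzOnWith.of_dist_le' fun u hu v hv => ?_
  have hJ := abs_jumpIntegral_sub_le hμ hA hu.2 hv.2
  have hsq : |δ ^ 2 / 2 * u ^ 2 - δ ^ 2 / 2 * v ^ 2| ≤ δ ^ 2 * A * |u - v| := by
    rw [show δ ^ 2 / 2 * u ^ 2 - δ ^ 2 / 2 * v ^ 2 = δ ^ 2 / 2 * (u + v) * (u - v) by ring,
      abs_mul, abs_of_nonneg (by nlinarith [hu.1, hv.1, sq_nonneg δ])]
    exact mul_le_mul_of_nonneg_right (by nlinarith [hu.2, hv.2, sq_nonneg δ]) (abs_nonneg _)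
  rw [dist_eq, dist_eq, affineR_eq, affineR_eq]
  calc _ = |-(k * (u - v)) + (δ ^ 2 / 2 * u ^ 2 - δ ^ 2 / 2 * v ^ 2)
          + (jumpIntegral μ u - jumpIntegral μ v)| := by ring_nf
    _ ≤ |k| * |u - v| + δ ^ 2 * A * |u - v|
          + (∫ z in Ioi (0:ℝ), z * exp (z * A) ∂μ) * |u - v| := by
      refine (abs_add_three _ _ _).trans ?_
      rw [abs_neg, abs_mul]
      gcongr
    _ = _ := by ring

lemma affineR_le_div_mul (hA : 0 < A) {c : ℝ} (hc : 0 ≤ c) (hcA : c ≤ A) :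
    affineR k δ μ c ≤ c / A * affineR k δ μ A := by
  have hJ := jumpIntegral_le_div_mul hμ hA hc hcA
  have hsq : c ^ 2 ≤ c / A * A ^ 2 := by
    rw [div_mul_eq_mul_div, le_div_iff₀ hA]
    nlinarith [mul_le_mul_of_nonneg_left hcA (mul_nonneg hc hA.le)]
  rw [affineR_eq, affineR_eq]
  have hk : -(k * c) = c / A * -(k * A) := by field_simp
  nlinarith [mul_le_mul_of_nonneg_left hsq (by positivity : (0:ℝ) ≤ δ ^ 2 / 2)]

lemma affineR_le_max_zero (hA : 0 < A) {c : ℝ} (hc : 0 ≤ c) (hcA : c ≤ A) :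
    affineR k δ μ c ≤ max 0 (affineR k δ μ A) := by
  have hw₀ : 0 ≤ c / A := div_nonneg hc hA.le
  have hw₁ : c / A ≤ 1 := (div_le_one hA).2 hcA
  refine (affineR_le_div_mul hμ hA hc hcA).trans ?_
  rcases le_total (affineR k δ μ A) 0 with h | h
  · exact (mul_nonpos_of_nonneg_of_nonpos hw₀ h).trans (le_max_left _ _)
  · exact (mul_le_of_le_one_left h hw₁).trans (le_max_right _ _)

end AffineR

section AffineF

variable {k θ A : ℝ} {m : Measure ℝ}

lemma affineF_nonneg (hk : 0 ≤ k) (hθ : 0 ≤ θ) {u : ℝ} (hu : 0 ≤ u) :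
    0 ≤ affineF k θ m u :=
  add_nonneg (by positivity) (jumpIntegral_nonneg m hu)

lemma monotoneOn_affineF (hk : 0 ≤ k) (hθ : 0 ≤ θ) (hA : 0 ≤ A)
    (hm : IntegrableOn (fun z => z * exp (z * A)) (Ioi 0) m) :
    MonotoneOn (affineF k θ m) (Iic A) := fun u hu v hv huv =>
  add_le_add (by gcongr) (monotoneOn_jumpIntegral hm hA hu hv huv)

end AffineF

section Clamp

variable {a b : ℝ} {E : Type*} [NormedAddCommGroup E] {f : ℝ → E}

lemma LipschitzOnWith.lipschitzWith_IccExtend (hab : a ≤ b) {K : NNReal}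
    (hf : LipschitzOnWith K f (Icc a b)) :
    LipschitzWith K (IccExtend hab ((Icc a b).domRestrict f)) := by
  simpa [IccExtend] using hf.to_restrict.comp (LipschitzWith.projIcc hab)

lemma ContinuousOn.exists_forall_norm_IccExtend_le (hab : a ≤ b) (hf : ContinuousOn f (Icc a b)) :
    ∃ M, ∀ x, ‖IccExtend hab ((Icc a b).domRestrict f) x‖ ≤ M := by
  obtain ⟨M, hM⟩ := isCompact_Icc.exists_bound_of_continuousOn hf
  exact ⟨M, fun x => hM _ (projIcc a b hab x).2⟩

lemma ContinuousOn.exists_continuous_eqOn_Icc (hab : a ≤ b) (hf : ContinuousOn f (Icc a b)) :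
    ∃ g : ℝ → E, Continuous g ∧ EqOn g f (Icc a b) :=
  ⟨IccExtend hab ((Icc a b).domRestrict f), continuous_IccExtend_iff.2 hf.domRestrict,
    fun _ hx => IccExtend_of_mem _ _ hx⟩

end Clamp

/-- Substituting `α = ψ - g` gives the ODE `α' = f (α + g)`, `α 0 = 0`, which Picard–Lindelöf
solves on all of `[0, T]` because `f` is bounded and globally Lipschitz. -/
theorem exists_eq_add_integral_of_lipschitzWith {E : Type*} [NormedAddCommGroup E]
    [NormedSpace ℝ E] [CompleteSpace E] {f : E → E} {K : NNReal} (hf : LipschitzWith K f)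
    {M : ℝ} (hM : ∀ x, ‖f x‖ ≤ M) {g : ℝ → E} (hg : Continuous g) {T : ℝ}
    (hT : 0 ≤ T) :
    ∃ ψ : ℝ → E, ContinuousOn ψ (Icc 0 T) ∧
      ∀ t ∈ Icc 0 T, ψ t = g t + ∫ s in (0:ℝ)..t, f (ψ s) := by
  have hPL : IsPicardLindelof (fun t x => f (x + g t)) (tmin := 0) (tmax := T)
      ⟨0, left_mem_Icc.2 hT⟩ 0 (M.toNNReal * T.toNNReal) 0 M.toNNReal K := by
    refine ⟨fun t _ => ?_, fun x _ => ?_, fun t _ x _ => ?_, ?_⟩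
    · simpa [Function.comp_def] using
        (hf.comp (isometry_add_right (g t)).lipschitz).lipschitzOnWith
    · exact (hf.continuous.comp (continuous_const.add hg)).continuousOn
    · exact (hM _).trans (le_coe_toNNReal M)
    · simp [hT]
  obtain ⟨α, hα0, hα⟩ := IsPicardLindelof.exists_eq_forall_mem_Icc_hasDerivWithinAt₀ hPL
  have hαc : ContinuousOn α (Icc 0 T) := fun t ht => (hα t ht).continuousWithinAt
  refine ⟨fun t => α t + g t, hαc.add hg.continuousOn, fun t ht => ?_⟩
  have hsub : Icc 0 t ⊆ Icc 0 T := Icc_subset_Icc_right ht.2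
  have hint : IntervalIntegrable (fun s => f (α s + g s)) volume 0 t :=
    ((hf.continuous.comp_continuousOn (hαc.add hg.continuousOn)).mono
      hsub).intervalIntegrable_of_Icc ht.1
  have hFTC : ∫ s in (0:ℝ)..t, f (α s + g s) = α t - α 0 := by
    refine integral_eq_sub_of_hasDeriv_right_of_le ht.1 (hαc.mono hsub) (fun s hs => ?_) hint
    exact ((hα s (hsub (Ioo_subset_Icc_self hs))).hasDerivAt
      (Icc_mem_nhds hs.1 (hs.2.trans_le ht.2))).hasDerivWithinAt
  simp only at hα0
  rw [hFTC, hα0, sub_zero, add_comm]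

theorem nonneg_of_eq_add_integral {ψ g h : ℝ → ℝ} {T : ℝ} (hψ : ContinuousOn ψ (Icc 0 T))
    (hg : MonotoneOn g (Icc 0 T)) (hh : IntervalIntegrable h volume 0 T)
    (hh_nonneg : ∀ s ∈ Icc 0 T, ψ s < 0 → 0 ≤ h s)
    (heq : ∀ t ∈ Icc 0 T, ψ t = g t + ∫ s in (0:ℝ)..t, h s) (hψ0 : 0 ≤ ψ 0) :
    ∀ t ∈ Icc 0 T, 0 ≤ ψ t := by
  have hh_sub : ∀ x ∈ Icc 0 T, IntervalIntegrable h volume 0 x := fun x hx =>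
    hh.mono_set (uIcc_subset_uIcc_left (by rwa [uIcc_of_le (hx.1.trans hx.2)]))
  intro t ht
  by_contra! hneg
  -- `c` is the last time in `[0, t]` with `ψ c ≥ 0`; on `(c, t]` we have `h ≥ 0`, so `ψ t ≥ ψ c`.
  set S := Icc 0 t ∩ ψ ⁻¹' Ici 0
  have hS : IsClosed S := (hψ.mono (Icc_subset_Icc_right ht.2)).preimage_isClosed_of_isClosed
    isClosed_Icc isClosed_Ici
  have hS_bdd : BddAbove S := ⟨t, fun s hs => hs.1.2⟩
  obtain ⟨⟨hc0, hct⟩, (hψc : 0 ≤ ψ (sSup S))⟩ : sSup S ∈ S :=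
    hS.csSup_mem ⟨0, ⟨left_mem_Icc.2 ht.1, hψ0⟩⟩ hS_bdd
  set c := sSup S
  have hcT : c ∈ Icc 0 T := ⟨hc0, hct.trans ht.2⟩
  have h_after : 0 ≤ ∫ s in c..t, h s := by
    rw [intervalIntegral.integral_of_le hct]
    refine setIntegral_nonneg measurableSet_Ioc fun s ⟨hcs, hst⟩ => hh_nonneg s
      ⟨hc0.trans hcs.le, hst.trans ht.2⟩ (not_le.1 fun hψs => ?_)
    exact (le_csSup hS_bdd ⟨⟨hc0.trans hcs.le, hst⟩, hψs⟩).not_gt hcs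
  have hsplit := integral_interval_sub_left (hh_sub t ht) (hh_sub c hcT)
  linarith [heq t ht, heq c hcT, hg hcT ht hct]

theorem le_of_eq_add_integral {ψ g h : ℝ → ℝ} {T B : ℝ} (hg : MonotoneOn g (Icc 0 T))
    (hh : IntervalIntegrable h volume 0 T) (hB : 0 ≤ B) (hhB : ∀ s, h s ≤ B)
    (heq : ∀ t ∈ Icc 0 T, ψ t = g t + ∫ s in (0:ℝ)..t, h s) :
    ∀ t ∈ Icc 0 T, ψ t ≤ g T + T * B := by
  intro t ht
  have hT := ht.1.trans ht.2
  have hint := intervalIntegral.integral_mono_on ht.1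
    (hh.mono_set (uIcc_subset_uIcc_left (by rwa [uIcc_of_le hT])))
    intervalIntegrable_const fun s _ => hhB s
  rw [intervalIntegral.integral_const, smul_eq_mul, sub_zero] at hint
  linarith [heq t ht, hg ht (right_mem_Icc.2 hT) ht.2, mul_le_mul_of_nonneg_right ht.2 hB]

lemma exists_clamp_affineR {k δ A : ℝ} {μ : Measure ℝ} (hA : 0 < A)
    (hμ : IntegrableOn (fun z => z * exp (z * A)) (Ioi 0) μ) :
    ∃ R : ℝ → ℝ, (∃ K, LipschitzWith K R) ∧ (∃ M, ∀ u, ‖R u‖ ≤ M) ∧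
      EqOn R (affineR k δ μ) (Icc 0 A) ∧ (∀ u, R u ≤ max 0 (affineR k δ μ A)) ∧
      ∀ u ≤ 0, R u = 0 := by
  have hLip := lipschitzOnWith_affineR (k := k) (δ := δ) hμ hA.le
  refine ⟨IccExtend hA.le ((Icc 0 A).domRestrict (affineR k δ μ)),
    ⟨_, hLip.lipschitzWith_IccExtend hA.le⟩,
    hLip.continuousOn.exists_forall_norm_IccExtend_le hA.le,
    fun u hu => IccExtend_of_mem _ _ hu,
    fun u => affineR_le_max_zero hμ hA (projIcc 0 A hA.le u).2.1 (projIcc 0 A hA.le u).2.2,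
    fun u hu => ?_⟩
  rw [IccExtend_of_le_left _ _ hu]
  exact affineR_zero

lemma integral_nonneg_and_le_mul {f : ℝ → ℝ} {t B : ℝ} (ht : 0 ≤ t)
    (hf : ∀ s ∈ Icc 0 t, f s ∈ Icc 0 B) :
    0 ≤ ∫ s in (0:ℝ)..t, f s ∧ ∫ s in (0:ℝ)..t, f s ≤ t * B := by
  refine ⟨intervalIntegral.integral_nonneg ht fun s hs => (hf s hs).1, ?_⟩
  have h := intervalIntegral.norm_integral_le_of_norm_le_const (a := 0) (b := t) (C := B)
    fun s hs => by
      have hs' := hf s (Ioc_subset_Icc_self (by rwa [uIoc_of_le ht] at hs))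
      rw [norm_of_nonneg hs'.1]
      exact hs'.2
  rw [sub_zero, abs_of_nonneg ht, mul_comm] at h
  exact (le_abs_self _).trans h

theorem riccati_existence_affine_general
    (k δ θ T A : ℝ) (hk : 0 ≤ k) (hθ : 0 ≤ θ) (hT : 0 < T) (hA : 0 < A)
    (μ m : Measure ℝ)
    (hμ_int : IntegrableOn (fun z => min z 1) (Set.Ioi 0) μ)
    (hm_int : IntegrableOn (fun z => min z 1) (Set.Ioi 0) m)
    (G : ℝ → ℝ) (hG_cont : ContinuousOn G (Set.Icc 0 T))
    (hG_mono : MonotoneOn G (Set.Icc 0 T)) (hG0 : G 0 = 0)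
    (hexp_int : IntegrableOn (fun z => z * Real.exp (z * A)) (Set.Ioi 1) (μ + m))
    (hbound : 2 * G T + T * max 0 (affineR k δ μ A) ≤ A) :
    ∃ ψ : ℝ → ℝ, ContinuousOn ψ (Set.Icc 0 T)
      ∧ (∀ t ∈ Set.Icc 0 T,
          ψ t = 2 * G t + ∫ s in (0:ℝ)..t, affineR k δ μ (ψ s))
      ∧ (∀ t ∈ Set.Icc 0 T, 0 ≤ ψ t ∧ ψ t ≤ A)
      ∧ (∀ t ∈ Set.Icc 0 T,
          0 ≤ (∫ s in (0:ℝ)..t, affineF k θ m (ψ s))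
          ∧ (∫ s in (0:ℝ)..t, affineF k θ m (ψ s)) ≤ T * affineF k θ m A) := by
  have hexp := hexp_int
  rw [IntegrableOn, Measure.restrict_add] at hexp
  have hμ := integrableOn_mul_exp_Ioi_zero hμ_int hexp.left_of_add_measure
  have hm := integrableOn_mul_exp_Ioi_zero hm_int hexp.right_of_add_measure
  obtain ⟨R, ⟨K, hRLip⟩, ⟨M, hRM⟩, hR_eq, hR_le, hR_neg⟩ :=
    exists_clamp_affineR (k := k) (δ := δ) hA hμ
  obtain ⟨G', hG'c, hG'⟩ := hG_cont.exists_continuous_eqOn_Icc hT.le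
  obtain ⟨ψ, hψc, hψeq⟩ := exists_eq_add_integral_of_lipschitzWith (g := fun t => 2 * G' t)
    hRLip hRM (continuous_const.mul hG'c) hT.le
  replace hψeq : ∀ t ∈ Icc 0 T, ψ t = 2 * G t + ∫ s in (0:ℝ)..t, R (ψ s) :=
    fun t ht => by rw [hψeq t ht, hG' ht]
  have h2G : MonotoneOn (fun t => 2 * G t) (Icc 0 T) := fun a ha b hb hab => by
    linarith [hG_mono ha hb hab]
  have hRψ : IntervalIntegrable (fun s => R (ψ s)) volume 0 T :=
    (hRLip.continuous.comp_continuousOn hψc).intervalIntegrable_of_Icc hT.le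
  have hψI : ∀ t ∈ Icc 0 T, ψ t ∈ Icc 0 A := fun t ht =>
    ⟨nonneg_of_eq_add_integral hψc h2G hRψ (fun s _ hs => (hR_neg _ hs.le).ge) hψeq
        (by simp [hψeq 0 (left_mem_Icc.2 hT.le), hG0]) t ht,
      (le_of_eq_add_integral h2G hRψ (le_max_left _ _) (fun _ => hR_le _) hψeq t ht).trans
        hbound⟩
  refine ⟨ψ, hψc, fun t ht => ?_, hψI, fun t ht => ?_⟩
  · rw [hψeq t ht, intervalIntegral.integral_congr fun s hs => hR_eq (hψI s
      (Icc_subset_Icc_right ht.2 (by rwa [uIcc_of_le ht.1] at hs)))]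
  · obtain ⟨h0, hle⟩ := integral_nonneg_and_le_mul ht.1 fun s hs =>
      have hs := hψI s (Icc_subset_Icc_right ht.2 hs)
      ⟨affineF_nonneg hk hθ hs.1, monotoneOn_affineF hk hθ hA.le hm hs.2 (le_refl A) hs.2⟩
    exact ⟨h0, hle.trans (mul_le_mul_of_nonneg_right ht.2 (affineF_nonneg hk hθ hA.le))⟩

/-- Existence and bounds for the solution of the Riccati-type equation
`ψ(t) = 2G(t) + ∫_0^t R(ψ(s)) ds` on `[0,T]`, together with the bounds
`0 ≤ φ(t) = ∫_0^t F(ψ(s)) ds ≤ T·F(A)`, under the quantitative hypothesis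
`2G(T) + T·max(0, R(A)) ≤ A` and exponential integrability of the jump measures. -/
theorem riccati_existence_affine
    (k δ θ T A : ℝ) (hk : 0 ≤ k) (hδ : 0 ≤ δ) (hθ : 0 ≤ θ) (hT : 0 < T) (hA : 0 < A)
    (μ m : Measure ℝ)
    (hμ_int : IntegrableOn (fun z => min z 1) (Set.Ioi 0) μ)
    (hm_int : IntegrableOn (fun z => min z 1) (Set.Ioi 0) m)
    (G : ℝ → ℝ) (hG_cont : ContinuousOn G (Set.Icc 0 T))
    (hG_mono : MonotoneOn G (Set.Icc 0 T)) (hG0 : G 0 = 0)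
    (hexp_int : IntegrableOn (fun z => z * Real.exp (z * A)) (Set.Ioi 1) (μ + m))
    (hbound : 2 * G T + T * max 0 (affineR k δ μ A) ≤ A) :
    ∃ ψ : ℝ → ℝ, ContinuousOn ψ (Set.Icc 0 T)
      ∧ (∀ t ∈ Set.Icc 0 T,
          ψ t = 2 * G t + ∫ s in (0:ℝ)..t, affineR k δ μ (ψ s))
      ∧ (∀ t ∈ Set.Icc 0 T, 0 ≤ ψ t ∧ ψ t ≤ A)
      ∧ (∀ t ∈ Set.Icc 0 T,
          0 ≤ (∫ s in (0:ℝ)..t, affineF k θ m (ψ s))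
          ∧ (∫ s in (0:ℝ)..t, affineF k θ m (ψ s)) ≤ T * affineF k θ m A) :=
  riccati_existence_affine_general k δ θ T A hk hθ hT hA μ m hμ_int hm_int G hG_cont hG_mono hG0
    hexp_int hbound
end

section
/- Let n ≥ 1, let C be a symmetric positive semidefinite real n×n matrix, m ∈ ℝⁿ, and let Z = (Z₁,…,Zₙ) be a random vector with the multivariate Gaussian law of mean m and covariance C. Let ζ₁,…,ζₙ ≥ 0 and let φ : ℝ → ℝ be continuously differentiable with φ and φ′ bounded. Then 𝔼[φ′(Σᵢ ζᵢ e^{Zᵢ}) · Σᵢ ζᵢ (C𝟙)ᵢ e^{Zᵢ}] = 𝔼[φ(Σᵢ ζᵢ e^{Zᵢ}) · Σᵢ (Zᵢ − mᵢ)], where 𝟙 = (1,…,1)ᵀ and (C𝟙)ᵢ = Σⱼ Cᵢⱼ. The identity holds even when C is degenerate. -/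
open MeasureTheory ProbabilityTheory Real Finset

section
open scoped ComplexOrder

/-- The positive semidefinite square root of a positive semidefinite matrix
(the definition `Matrix.PosSemidef.sqrt` of the older Mathlib, since removed). -/
noncomputable def Matrix.PosSemidef.sqrt {n : Type*} [Fintype n] [DecidableEq n]
    {𝕜 : Type*} [RCLike 𝕜] {A : Matrix n n 𝕜} (hA : A.PosSemidef) : Matrix n n 𝕜 :=
  hA.1.eigenvectorUnitary.1 * Matrix.diagonal ((↑) ∘ (√·) ∘ hA.1.eigenvalues) *
  (star hA.1.eigenvectorUnitary : Matrix n n 𝕜)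

end

/-!
Realise `Z` as `m + A N` with `A = C^{1/2}` symmetric and `N` standard Gaussian on `ℝⁿ`;
put `g z = φ (∑ᵢ ζᵢ exp (m + A z)ᵢ)` and `w = A 𝟙`. Since `C 𝟙 = A w`, the left integrand
is `∑ₖ wₖ ∂ₖ g (N)`, and since `A` is symmetric, `∑ᵢ (Zᵢ - mᵢ) = ⟪w, N⟫`. So the identity is
`𝔼[∂ₖ g (N)] = 𝔼[g (N) Nₖ]` summed against `w`: the one-dimensional Stein identity
(integration by parts against the density `p`, where `p' x = -x p x`) in the `k`-th variable,
after Fubini. Only `N` needs a density, so a degenerate `C` is no obstacle.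
-/

open Matrix

lemma hasDerivAt_gaussianPDFReal_zero_one (x : ℝ) :
    HasDerivAt (gaussianPDFReal 0 1) (-x * gaussianPDFReal 0 1 x) x := by
  have h : HasDerivAt (fun x : ℝ => -(x - 0) ^ 2 / (2 * ((1 : NNReal) : ℝ))) (-x) x :=
    ((((hasDerivAt_id x).sub_const 0).pow 2).neg.div_const _).congr_deriv (by simp; ring)
  rw [gaussianPDFReal_def]
  exact (((hasDerivAt_exp _).comp x h).const_mul _).congr_deriv (by simp only; ring)

lemma integrable_gaussianReal_zero_one_iff {f : ℝ → ℝ} :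
    Integrable f (gaussianReal 0 1) ↔ Integrable (fun x => gaussianPDFReal 0 1 x * f x) := by
  rw [gaussianReal_of_var_ne_zero 0 one_ne_zero,
    integrable_withDensity_iff_integrable_smul' (measurable_gaussianPDF 0 1)
      (ae_of_all _ fun _ => gaussianPDF_lt_top)]
  simp

theorem integral_deriv_gaussianReal_eq_integral_mul_id {g g' : ℝ → ℝ}
    (hg : ∀ x, HasDerivAt g (g' x) x) {c : ℝ} (hg_bdd : ∀ x, |g x| ≤ c)
    (hg' : Integrable g' (gaussianReal 0 1)) :
    ∫ x, g' x ∂gaussianReal 0 1 = ∫ x, g x * x ∂gaussianReal 0 1 := by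
  set p := gaussianPDFReal 0 1
  have hg_cont : Continuous g := continuous_iff_continuousAt.2 fun x => (hg x).continuousAt
  have hgx : Integrable (fun x => g x * x) (gaussianReal 0 1) :=
    ((memLp_id_gaussianReal 1).integrable le_rfl).bdd_mul hg_cont.aestronglyMeasurable
      (ae_of_all _ hg_bdd)
  have hpg : Integrable (p * g) :=
    (integrable_gaussianPDFReal 0 1).mul_bdd hg_cont.aestronglyMeasurable (ae_of_all _ hg_bdd)
  have hp'g : Integrable ((fun x => -x * p x) * g) :=
    (integrable_gaussianReal_zero_one_iff.1 hgx).neg.congr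
      (ae_of_all _ fun x => by simp only [Pi.neg_apply, Pi.mul_apply]; ring)
  have ibp := integral_mul_deriv_eq_deriv_mul_of_integrable
    (fun x _ => hasDerivAt_gaussianPDFReal_zero_one x) (fun x _ => hg x)
    (integrable_gaussianReal_zero_one_iff.1 hg') hp'g hpg
  simp only [integral_gaussianReal_eq_integral_smul one_ne_zero, smul_eq_mul, ibp, ← integral_neg]
  congr 1; ext x; ring

section Fubini

variable {α E : Type*} [MeasurableSpace α] [NormedAddCommGroup E]
  {n : ℕ} (μ : Measure α) [SigmaFinite μ] (k : Fin (n + 1)) {F : (Fin (n + 1) → α) → E}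

lemma integral_pi_eq_integral_integral_insertNth [NormedSpace ℝ E]
    (hF : Integrable F (Measure.pi fun _ => μ)) :
    ∫ z, F z ∂Measure.pi (fun _ => μ) =
      ∫ y, ∫ x, F (k.insertNth x y) ∂μ ∂Measure.pi (fun _ => μ) := by
  have hmp := (measurePreserving_piFinSuccAbove (fun _ => μ) k).symm
  rw [← hmp.integral_comp' F]
  exact integral_prod_symm _
    ((hmp.integrable_comp_emb (MeasurableEquiv.measurableEmbedding _)).2 hF)

lemma MeasureTheory.Integrable.ae_integrable_insertNth
    (hF : Integrable F (Measure.pi fun _ => μ)) :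
    ∀ᵐ y ∂Measure.pi (fun _ => μ), Integrable (fun x => F (k.insertNth x y)) μ :=
  ((measurePreserving_piFinSuccAbove (fun _ => μ) k).symm.integrable_comp_emb
    (MeasurableEquiv.measurableEmbedding _) |>.2 hF).prod_left_ae

end Fubini

section PiGaussian

lemma integrable_exp_dotProduct_pi_gaussianReal {ι : Type*} [Fintype ι] (μ : ι → ℝ)
    (v : ι → NNReal) (a : ι → ℝ) :
    Integrable (fun z => exp (a ⬝ᵥ z)) (Measure.pi fun i => gaussianReal (μ i) (v i)) := by
  simp only [dotProduct, exp_sum]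
  exact Integrable.fintype_prod_dep fun i => integrable_exp_mul_gaussianReal (a i)

lemma integrable_mul_eval_pi_gaussianReal {ι : Type*} [Fintype ι] (μ : ι → ℝ)
    (v : ι → NNReal) {g : (ι → ℝ) → ℝ}
    (hg_meas : AEStronglyMeasurable g (Measure.pi fun i => gaussianReal (μ i) (v i)))
    {c : ℝ} (hg_bdd : ∀ z, |g z| ≤ c) (k : ι) :
    Integrable (fun z => g z * z k) (Measure.pi fun i => gaussianReal (μ i) (v i)) :=
  ((measurePreserving_eval _ k).integrable_comp_of_integrable (g := fun x => x)
    ((memLp_id_gaussianReal 1).integrable le_rfl)).bdd_mul hg_meas (ae_of_all _ hg_bdd)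

theorem integral_partialDeriv_pi_gaussianReal {n : ℕ} (k : Fin n) {g g' : (Fin n → ℝ) → ℝ}
    (hg : ∀ z, HasDerivAt (fun x => g (Function.update z k x)) (g' z) (z k))
    (hg_meas : AEStronglyMeasurable g (Measure.pi fun _ => gaussianReal 0 1))
    {c : ℝ} (hg_bdd : ∀ z, |g z| ≤ c)
    (hg' : Integrable g' (Measure.pi fun _ => gaussianReal 0 1)) :
    ∫ z, g' z ∂Measure.pi (fun _ => gaussianReal 0 1) =
      ∫ z, g z * z k ∂Measure.pi (fun _ => gaussianReal 0 1) := by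
  obtain ⟨n, rfl⟩ := Nat.exists_eq_succ_of_ne_zero k.pos.ne'
  rw [integral_pi_eq_integral_integral_insertNth _ k hg',
    integral_pi_eq_integral_integral_insertNth _ k
      (integrable_mul_eval_pi_gaussianReal _ _ hg_meas hg_bdd k)]
  refine integral_congr_ae ?_
  filter_upwards [hg'.ae_integrable_insertNth _ k] with y hy
  simpa using integral_deriv_gaussianReal_eq_integral_mul_id
    (fun x => by simpa using hg (k.insertNth x y)) (fun x => hg_bdd _) hy

theorem integral_sum_mul_partialDeriv_pi_gaussianReal {n : ℕ} (w : Fin n → ℝ)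
    {g : (Fin n → ℝ) → ℝ} {D : Fin n → (Fin n → ℝ) → ℝ}
    (hg : ∀ k z, HasDerivAt (fun x => g (Function.update z k x)) (D k z) (z k))
    (hg_meas : AEStronglyMeasurable g (Measure.pi fun _ => gaussianReal 0 1))
    {c : ℝ} (hg_bdd : ∀ z, |g z| ≤ c)
    (hD : ∀ k, Integrable (D k) (Measure.pi fun _ => gaussianReal 0 1)) :
    ∫ z, ∑ k, w k * D k z ∂Measure.pi (fun _ => gaussianReal 0 1) =
      ∫ z, g z * (w ⬝ᵥ z) ∂Measure.pi (fun _ => gaussianReal 0 1) := by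
  have hgz := integrable_mul_eval_pi_gaussianReal _ _ hg_meas hg_bdd
  simp only [dotProduct, Finset.mul_sum, mul_left_comm (g _)]
  rw [integral_finsetSum _ fun k _ => (hD k).const_mul (w k),
    integral_finsetSum _ fun k _ => (hgz k).const_mul (w k)]
  refine Finset.sum_congr rfl fun k _ => ?_
  rw [integral_const_mul, integral_const_mul,
    integral_partialDeriv_pi_gaussianReal k (hg k) hg_meas hg_bdd (hD k)]

end PiGaussian

namespace Matrix.PosSemidef

open scoped ComplexOrder

variable {n 𝕜 : Type*} [Fintype n] [DecidableEq n] [RCLike 𝕜] {A : Matrix n n 𝕜}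

lemma isHermitian_sqrt (hA : A.PosSemidef) : hA.sqrt.IsHermitian :=
  isHermitian_mul_mul_conjTranspose _ (isHermitian_diagonal_of_self_adjoint _ (by ext; simp))

lemma sqrt_mul_self (hA : A.PosSemidef) : hA.sqrt * hA.sqrt = A := by
  conv_rhs => rw [hA.1.spectral_theorem, Unitary.conjStarAlgAut_apply]
  simp only [sqrt, Matrix.mul_assoc]
  congr 1
  rw [← Matrix.mul_assoc (star _), Unitary.coe_star_mul_self, Matrix.one_mul,
    ← Matrix.mul_assoc, diagonal_mul_diagonal]
  congr 2; ext k
  simp [← RCLike.ofReal_mul, Real.mul_self_sqrt (hA.eigenvalues_nonneg k)]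

end Matrix.PosSemidef

lemma Matrix.mulVec_update_apply {l o R : Type*} [Fintype o] [DecidableEq o] [CommRing R]
    (A : Matrix l o R) (z : o → R) (k : o) (x : R) (i : l) :
    (A *ᵥ Function.update z k x) i = (A *ᵥ z) i + A i k * (x - z k) := by
  have : Function.update z k x = z + Pi.single k (x - z k) := by
    ext j; by_cases h : j = k <;> simp [h]
  rw [this, mulVec_add, mulVec_single]; simp

lemma Matrix.sum_mulVec_apply {l o R : Type*} [Fintype l] [Fintype o] [CommSemiring R]
    (A : Matrix l o R) (z : o → R) : ∑ i, (A *ᵥ z) i = (Aᵀ *ᵥ 1) ⬝ᵥ z := by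
  rw [← one_dotProduct, dotProduct_mulVec, ← vecMul_transpose, transpose_transpose]

section Lognormal

variable {ι : Type*} [Fintype ι] (ζ m : ι → ℝ) (A : Matrix ι ι ℝ) {φ : ℝ → ℝ}

lemma hasDerivAt_comp_sum_mul_exp_update [DecidableEq ι] (hφ : Differentiable ℝ φ)
    (k : ι) (z : ι → ℝ) :
    HasDerivAt (fun x => φ (∑ i, ζ i * exp ((m + A *ᵥ Function.update z k x) i)))
      (deriv φ (∑ i, ζ i * exp ((m + A *ᵥ z) i)) *
        ∑ i, ζ i * A i k * exp ((m + A *ᵥ z) i)) (z k) := by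
  have hsum : HasDerivAt (fun x => ∑ i, ζ i * exp ((m + A *ᵥ z) i + A i k * (x - z k)))
      (∑ i, ζ i * A i k * exp ((m + A *ᵥ z) i)) (z k) :=
    HasDerivAt.fun_sum fun i _ => (((((hasDerivAt_id (z k)).sub_const (z k)).const_mul
      (A i k)).const_add _).exp.const_mul (ζ i)).congr_deriv (by simp; ring)
  have := (hφ _).hasDerivAt.comp (z k) hsum
  simp only [sub_self, mul_zero, add_zero] at this
  simp only [Pi.add_apply, mulVec_update_apply, ← add_assoc]
  exact this

lemma integrable_deriv_comp_sum_mul_exp_mulVec {c : ℝ} (hφ' : ∀ y, |deriv φ y| ≤ c) (k : ι)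
    (μ : ι → ℝ) (v : ι → NNReal) :
    Integrable (fun z => deriv φ (∑ i, ζ i * exp ((m + A *ᵥ z) i)) *
        ∑ i, ζ i * A i k * exp ((m + A *ᵥ z) i))
      (Measure.pi fun i => gaussianReal (μ i) (v i)) := by
  refine Integrable.bdd_mul (integrable_finsetSum _ fun i _ => ?_)
    ((measurable_deriv φ).comp_aemeasurable (by fun_prop)).aestronglyMeasurable
    (ae_of_all _ fun z => hφ' _)
  refine ((integrable_exp_dotProduct_pi_gaussianReal μ v (A i)).const_mul
    (ζ i * A i k * exp (m i))).congr (ae_of_all _ fun z => ?_)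
  simp [exp_add, mulVec, mul_assoc]

end Lognormal

theorem integral_deriv_comp_sum_mul_exp_map_pi_gaussianReal {n : ℕ} (ζ m : Fin n → ℝ)
    {A C : Matrix (Fin n) (Fin n) ℝ} (hA : A.IsSymm) (hAC : A * A = C)
    {φ : ℝ → ℝ} (hφ : Differentiable ℝ φ) {c c' : ℝ}
    (hφ_bdd : ∀ y, |φ y| ≤ c) (hφ'_bdd : ∀ y, |deriv φ y| ≤ c') :
    ∫ x, deriv φ (∑ i, ζ i * exp (x i)) * ∑ i, ζ i * (∑ j, C i j) * exp (x i)
        ∂(Measure.pi fun _ => gaussianReal 0 1).map (fun z => m + A *ᵥ z) =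
      ∫ x, φ (∑ i, ζ i * exp (x i)) * ∑ i, (x i - m i)
        ∂(Measure.pi fun _ => gaussianReal 0 1).map (fun z => m + A *ᵥ z) := by
  have hT : Measurable fun z : Fin n → ℝ => m + A *ᵥ z := by fun_prop
  have hφ_cont := hφ.continuous
  rw [integral_map hT.aemeasurable (by fun_prop), integral_map hT.aemeasurable (by fun_prop)]
  have hC_row : ∀ i, ∑ j, C i j = ∑ k, A i k * (A *ᵥ 1) k := fun i => by
    simp only [← hAC, mul_apply, mulVec, dotProduct, Pi.one_apply, mul_one, Finset.mul_sum]
    exact Finset.sum_comm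
  have hl : ∀ z : Fin n → ℝ, deriv φ (∑ i, ζ i * exp ((m + A *ᵥ z) i)) *
      ∑ i, ζ i * (∑ j, C i j) * exp ((m + A *ᵥ z) i) =
        ∑ k, (A *ᵥ 1) k * (deriv φ (∑ i, ζ i * exp ((m + A *ᵥ z) i)) *
          ∑ i, ζ i * A i k * exp ((m + A *ᵥ z) i)) := fun z => by
    simp only [hC_row, Finset.mul_sum, Finset.sum_mul]
    rw [Finset.sum_comm]; congr! 2; ring
  have hr : ∀ z : Fin n → ℝ, ∑ i, ((m + A *ᵥ z) i - m i) = (A *ᵥ 1) ⬝ᵥ z := fun z => by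
    simp only [Pi.add_apply, add_sub_cancel_left, sum_mulVec_apply, hA.eq]
  simp only [hl, hr]
  exact integral_sum_mul_partialDeriv_pi_gaussianReal _
    (hasDerivAt_comp_sum_mul_exp_update ζ m A hφ) (by fun_prop)
    (fun _ => hφ_bdd _)
    (fun k => integrable_deriv_comp_sum_mul_exp_mulVec ζ m A hφ'_bdd k _ _)

lemma AEMeasurable.of_map_eq_map {Ω α E : Type*} [MeasurableSpace Ω] [MeasurableSpace α]
    [MeasurableSpace E] {P : Measure Ω} {μ : Measure α} [NeZero μ] {Z : Ω → E} {T : α → E}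
    (hT : AEMeasurable T μ) (h : P.map Z = μ.map T) : AEMeasurable Z P :=
  .of_map_ne_zero (h ▸ (Measure.map_ne_zero_iff hT).2 (NeZero.ne μ))

theorem gaussian_integration_by_parts_lognormal_general
    (n : ℕ)
    (C : Matrix (Fin n) (Fin n) ℝ) (hC : C.PosSemidef) (m : Fin n → ℝ)
    {Ω : Type*} [MeasurableSpace Ω] (P : Measure Ω)
    (Z : Ω → Fin n → ℝ)
    (hZ : Measure.map Z P
      = Measure.map (fun z => m + hC.sqrt.mulVec z)
          (Measure.pi fun _ : Fin n => gaussianReal 0 1))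
    (ζ : Fin n → ℝ)
    (φ : ℝ → ℝ) (hφ : ContDiff ℝ 1 φ)
    (hφbdd : ∃ c, ∀ y, |φ y| ≤ c) (hφ'bdd : ∃ c, ∀ y, |deriv φ y| ≤ c) :
    ∫ ω, deriv φ (∑ i, ζ i * Real.exp (Z ω i))
        * ∑ i, ζ i * (∑ j, C i j) * Real.exp (Z ω i) ∂P
      = ∫ ω, φ (∑ i, ζ i * Real.exp (Z ω i)) * ∑ i, (Z ω i - m i) ∂P := by
  obtain ⟨c, hφ_bdd⟩ := hφbdd
  obtain ⟨c', hφ'_bdd⟩ := hφ'bdd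
  have hZ_meas : AEMeasurable Z P := .of_map_eq_map (by fun_prop) hZ
  have h := integral_deriv_comp_sum_mul_exp_map_pi_gaussianReal ζ m
    (isHermitian_iff_isSymm.1 hC.isHermitian_sqrt) hC.sqrt_mul_self
    (hφ.differentiable one_ne_zero) hφ_bdd hφ'_bdd
  rwa [← hZ, integral_map hZ_meas (by fun_prop), integral_map hZ_meas (by fun_prop)] at h

/-- Gaussian integration-by-parts identity: if `Z` is a multivariate Gaussian vector in
`ℝⁿ` with mean `m` and (possibly degenerate) symmetric positive semidefinite covariance
`C`, `ζᵢ ≥ 0`, and `φ` is `C¹` with `φ, φ′` bounded, then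
`𝔼[φ′(Σᵢ ζᵢ e^{Zᵢ}) Σᵢ ζᵢ (C𝟙)ᵢ e^{Zᵢ}] = 𝔼[φ(Σᵢ ζᵢ e^{Zᵢ}) Σᵢ (Zᵢ − mᵢ)]`. -/
theorem gaussian_integration_by_parts_lognormal
    (n : ℕ) (hn : 1 ≤ n)
    (C : Matrix (Fin n) (Fin n) ℝ) (hC : C.PosSemidef) (m : Fin n → ℝ)
    {Ω : Type*} [MeasurableSpace Ω] (P : Measure Ω) [IsProbabilityMeasure P]
    (Z : Ω → Fin n → ℝ)
    (hZ : Measure.map Z P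
      = Measure.map (fun z => m + hC.sqrt.mulVec z)
          (Measure.pi fun _ : Fin n => gaussianReal 0 1))
    (ζ : Fin n → ℝ) (hζ : ∀ i, 0 ≤ ζ i)
    (φ : ℝ → ℝ) (hφ : ContDiff ℝ 1 φ)
    (hφbdd : ∃ c, ∀ y, |φ y| ≤ c) (hφ'bdd : ∃ c, ∀ y, |deriv φ y| ≤ c) :
    ∫ ω, deriv φ (∑ i, ζ i * Real.exp (Z ω i))
        * ∑ i, ζ i * (∑ j, C i j) * Real.exp (Z ω i) ∂P
      = ∫ ω, φ (∑ i, ζ i * Real.exp (Z ω i)) * ∑ i, (Z ω i - m i) ∂P :=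
  gaussian_integration_by_parts_lognormal_general n C hC m P Z hZ ζ φ hφ hφbdd hφ'bdd
end

section
/- Let a < b, let h : [a,b] → ℝ be integrable and nonincreasing, and set G(u) = ∫_a^u h(s) ds. Then ∫_a^b [G(u) − ((b−u)/(b−a))·G(a) − ((u−a)/(b−a))·G(b)] du = ∫_a^b h(s)·((a+b)/2 − s) ds, and this quantity is nonnegative and bounded above by ((b−a)²/8)·(h(a) − h(b)). -/
/-!
By Fubini, `∫_a^b G = ∫_a^b h(s) (b - s) ds`, and subtracting the integral of the chord
`(b - a)/2 · G(b)` leaves `∫_a^b h(s) (c - s) ds` with `c = (a + b)/2`. Folding `[c, b]` onto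
`[a, c]` by `s ↦ a + b - s` turns this into `∫_a^c (h(x) - h(a + b - x)) (c - x) dx`, whose
integrand lies between `0` and `(h(a) - h(b)) (c - x)` when `h` is nonincreasing.
-/

open MeasureTheory intervalIntegral Set

section NormedSpace

variable {E : Type*} [NormedAddCommGroup E] [NormedSpace ℝ E] {a b : ℝ} {f : ℝ → E}

theorem integral_integral_eq_integral_sub_smul [CompleteSpace E] (hab : a ≤ b)
    (hf : IntervalIntegrable f volume a b) :
    ∫ u in a..b, ∫ s in a..u, f s = ∫ s in a..b, (b - s) • f s := by
  set μ := volume.restrict (Ioc a b)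
  have hfμ : Integrable f μ := (intervalIntegrable_iff_integrableOn_Ioc_of_le hab).1 hf
  set F : ℝ → ℝ → E := fun u s => {p : ℝ × ℝ | p.2 ≤ p.1}.indicator (fun p => f p.2) (u, s)
  have hF : Integrable (Function.uncurry F) (μ.prod μ) :=
    (hfμ.comp_snd μ).indicator (measurableSet_le measurable_snd measurable_fst)
  have hrow : ∀ u ∈ Ioc a b, ∫ s, F u s ∂μ = ∫ s in a..u, f s := fun u hu => by
    have : F u = (Iic u).indicator f := rfl
    rw [this, MeasureTheory.integral_indicator measurableSet_Iic,
      Measure.restrict_restrict measurableSet_Iic, Iic_inter_Ioc_of_le hu.2,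
      integral_of_le hu.1.le]
  have hcol : ∀ s ∈ Ioc a b, ∫ u, F u s ∂μ = (b - s) • f s := fun s hs => by
    have : (fun u => F u s) = (Ici s).indicator (fun _ => f s) := rfl
    have hIcc : Ici s ∩ Ioc a b = Icc s b := by
      ext x
      simp only [mem_inter_iff, mem_Ici, mem_Ioc, mem_Icc]
      exact ⟨fun hx => ⟨hx.1, hx.2.2⟩, fun hx => ⟨hx.1, hs.1.trans_le hx.1, hx.2⟩⟩
    rw [this, integral_indicator_const _ measurableSet_Ici,
      measureReal_restrict_apply measurableSet_Ici, hIcc, Real.volume_real_Icc_of_le hs.2]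
  calc ∫ u in a..b, ∫ s in a..u, f s = ∫ u, ∫ s, F u s ∂μ ∂μ := by
        rw [integral_of_le hab]
        exact setIntegral_congr_fun measurableSet_Ioc fun u hu => (hrow u hu).symm
    _ = ∫ s, ∫ u, F u s ∂μ ∂μ := integral_integral_swap hF
    _ = ∫ s in a..b, (b - s) • f s := by
        rw [integral_of_le hab]
        exact setIntegral_congr_fun measurableSet_Ioc hcol

theorem integral_eq_integral_add_reflect_midpoint (hf : IntervalIntegrable f volume a b) :
    ∫ x in a..b, f x = ∫ x in a..(a + b) / 2, (f x + f (a + b - x)) := by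
  have hc : (a + b) / 2 ∈ uIcc a b := by
    rcases le_total a b with hab | hba
    · rw [uIcc_of_le hab]; constructor <;> linarith
    · rw [uIcc_of_ge hba]; constructor <;> linarith
  have hleft := hf.mono_set (uIcc_subset_uIcc_left hc)
  have hright := hf.mono_set (uIcc_subset_uIcc_right hc)
  have hsymm : a + b - (a + b) / 2 = (a + b) / 2 := by ring
  have hreflect : IntervalIntegrable (fun x => f (a + b - x)) volume a ((a + b) / 2) := by
    simpa [hsymm] using (hright.comp_sub_left (a + b)).symm
  rw [integral_add hleft hreflect, integral_comp_sub_left, hsymm, add_sub_cancel_left,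
    integral_add_adjacent_intervals hleft hright]

end NormedSpace

section Real

variable {a b : ℝ} {f : ℝ → ℝ}

theorem integral_primitive_sub_chord_eq (hab : a < b) (hf : IntervalIntegrable f volume a b) :
    ∫ u in a..b, ((∫ s in a..u, f s) - (u - a) / (b - a) * ∫ s in a..b, f s)
      = ∫ s in a..b, f s * ((a + b) / 2 - s) := by
  have hprimitive : IntervalIntegrable (fun u => ∫ s in a..u, f s) volume a b :=
    (continuousOn_primitive_interval' hf left_mem_uIcc).intervalIntegrable
  have hchord : ∫ u in a..b, (u - a) / (b - a) = (b - a) / 2 := by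
    rw [intervalIntegral.integral_div, integral_comp_sub_right (fun x => x), integral_id]
    field_simp [sub_ne_zero.2 hab.ne']
    ring
  have hweight : IntervalIntegrable (fun s => f s * (b - s)) volume a b :=
    hf.mul_continuousOn (continuous_const.sub continuous_id).continuousOn
  calc ∫ u in a..b, ((∫ s in a..u, f s) - (u - a) / (b - a) * ∫ s in a..b, f s)
      = (∫ s in a..b, f s * (b - s)) - (b - a) / 2 * ∫ s in a..b, f s := by
        rw [integral_sub hprimitive (Continuous.intervalIntegrable (by fun_prop) _ _),
          intervalIntegral.integral_mul_const, hchord,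
          integral_integral_eq_integral_sub_smul hab.le hf]
        simp only [smul_eq_mul, mul_comm]
    _ = ∫ s in a..b, f s * ((a + b) / 2 - s) := by
        rw [← intervalIntegral.integral_const_mul, ← integral_sub hweight (hf.const_mul _)]
        congr 1 with s
        ring

theorem integral_mul_midpoint_sub_eq_integral_reflect (hf : IntervalIntegrable f volume a b) :
    ∫ s in a..b, f s * ((a + b) / 2 - s)
      = ∫ x in a..(a + b) / 2, (f x - f (a + b - x)) * ((a + b) / 2 - x) := by
  rw [integral_eq_integral_add_reflect_midpoint
    (hf.mul_continuousOn (g := fun s => (a + b) / 2 - s) (by fun_prop))]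
  congr 1 with x
  ring

theorem AntitoneOn.sub_reflect_mem_Icc (hf : AntitoneOn f (Icc a b)) {x : ℝ}
    (hx : x ∈ Icc a ((a + b) / 2)) : f x - f (a + b - x) ∈ Icc 0 (f a - f b) := by
  obtain ⟨hax, hxc⟩ := hx
  have hxI : x ∈ Icc a b := ⟨hax, by linarith⟩
  have hx'I : a + b - x ∈ Icc a b := ⟨by linarith, by linarith⟩
  have ha : a ∈ Icc a b := ⟨le_rfl, by linarith⟩
  have hb : b ∈ Icc a b := ⟨by linarith, le_rfl⟩
  have := hf ha hxI hax
  have := hf hx'I hb hx'I.2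
  have := hf hxI hx'I (by linarith)
  constructor <;> linarith

theorem AntitoneOn.integral_mul_midpoint_sub_mem_Icc (hab : a ≤ b)
    (hf : AntitoneOn f (Icc a b)) :
    ∫ s in a..b, f s * ((a + b) / 2 - s) ∈ Icc 0 ((b - a) ^ 2 / 8 * (f a - f b)) := by
  set c := (a + b) / 2 with hc
  have hac : a ≤ c := by linarith
  have hsub : Icc a c ⊆ Icc a b := Icc_subset_Icc_right (by linarith)
  have hreflect : MonotoneOn (fun x => f (a + b - x)) (Icc a c) := fun x hx y hy hxy =>
    hf ⟨by linarith [hy.2], by linarith [hy.1]⟩ ⟨by linarith [hx.2], by linarith [hx.1]⟩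
      (by linarith)
  have hint : IntervalIntegrable (fun x => (f x - f (a + b - x)) * (c - x)) volume a c := by
    rw [← uIcc_of_le hac] at hsub hreflect
    exact ((hf.mono hsub).intervalIntegrable.sub hreflect.intervalIntegrable).mul_continuousOn
      (continuous_const.sub continuous_id).continuousOn
  have hweight : ∀ x ∈ Icc a c, 0 ≤ c - x := fun x hx => sub_nonneg.2 hx.2
  rw [integral_mul_midpoint_sub_eq_integral_reflect (uIcc_of_le hab ▸ hf).intervalIntegrable]
  constructor
  · exact integral_nonneg hac fun x hx => mul_nonneg (hf.sub_reflect_mem_Icc hx).1 (hweight x hx)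
  · calc ∫ x in a..c, (f x - f (a + b - x)) * (c - x)
        ≤ ∫ x in a..c, (f a - f b) * (c - x) :=
          integral_mono_on hac hint (Continuous.intervalIntegrable (by fun_prop) _ _)
            fun x hx => mul_le_mul_of_nonneg_right (hf.sub_reflect_mem_Icc hx).2 (hweight x hx)
      _ = (b - a) ^ 2 / 8 * (f a - f b) := by
          rw [intervalIntegral.integral_const_mul, integral_comp_sub_left (fun x => x),
            integral_id]
          ring

end Real

theorem trapezoid_interpolation_error_concave_general
    (a b : ℝ) (hab : a < b)
    (h : ℝ → ℝ)
    (hmono : AntitoneOn h (Set.Icc a b))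
    (G : ℝ → ℝ) (hG : ∀ u, G u = ∫ s in a..u, h s) :
    (∫ u in a..b,
        (G u - (b - u) / (b - a) * G a - (u - a) / (b - a) * G b))
      = (∫ s in a..b, h s * ((a + b) / 2 - s))
    ∧ 0 ≤ ∫ s in a..b, h s * ((a + b) / 2 - s)
    ∧ (∫ s in a..b, h s * ((a + b) / 2 - s))
        ≤ (b - a) ^ 2 / 8 * (h a - h b) := by
  obtain rfl : G = fun u => ∫ s in a..u, h s := funext hG
  refine ⟨?_, hmono.integral_mul_midpoint_sub_mem_Icc hab.le⟩
  simp only [integral_same, mul_zero, sub_zero]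
  exact integral_primitive_sub_chord_eq hab (uIcc_of_le hab.le ▸ hmono).intervalIntegrable

/-- Integrated linear-interpolation error of the primitive `G(u) = ∫_a^u h(s) ds` of a
nonincreasing integrable function `h`:
`∫_a^b [G(u) − ((b−u)/(b−a))G(a) − ((u−a)/(b−a))G(b)] du = ∫_a^b h(s)((a+b)/2 − s) ds`,
and this quantity lies in `[0, ((b−a)²/8)(h(a) − h(b))]`. -/
theorem trapezoid_interpolation_error_concave
    (a b : ℝ) (hab : a < b)
    (h : ℝ → ℝ) (hint : IntervalIntegrable h volume a b)
    (hmono : AntitoneOn h (Set.Icc a b))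
    (G : ℝ → ℝ) (hG : ∀ u, G u = ∫ s in a..u, h s) :
    (∫ u in a..b,
        (G u - (b - u) / (b - a) * G a - (u - a) / (b - a) * G b))
      = (∫ s in a..b, h s * ((a + b) / 2 - s))
    ∧ 0 ≤ ∫ s in a..b, h s * ((a + b) / 2 - s)
    ∧ (∫ s in a..b, h s * ((a + b) / 2 - s))
        ≤ (b - a) ^ 2 / 8 * (h a - h b) :=
  trapezoid_interpolation_error_concave_general a b hab h hmono G hG
end

section
/- Let κ > 0 and β ∈ (0,1) satisfy κ(β+1) > 2. Then there exists a constant C such that for all n ≥ 1, Σ_{i=1}^{n−1} [((i+1)/n)^κ − (i/n)^κ]³ · ((i+1)/n)^{κ(β−2)} ≤ C/n². -/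
/-!
The tangent-line bound `x^κ - y^κ ≤ κ x^(κ-1) (x - y)` for the convex power `κ ≥ 1` (note
`κ(β+1) > 2` and `β < 1` force `κ > 1`) bounds the `i`-th term by
`κ³ n⁻³ ((i+1)/n)^(κ(β+1)-3)`. The remaining sum is `n` times a Riemann sum of `x^q` on `[0, 1]`
with `q = κ(β+1) - 3 > -1`, hence `O(n)`: for `q ≥ 0` bound each term by `1`, for `q < 0`
telescope using concavity of `t^(q+1)`.
-/

open Real Finset

namespace Real

theorem rpow_sub_rpow_le_of_one_le {p x y : ℝ} (hp : 1 ≤ p) (hx : 0 < x) (hy : 0 ≤ y) :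
    x ^ p - y ^ p ≤ p * x ^ (p - 1) * (x - y) := by
  have hs : -1 ≤ y / x - 1 := by linarith [div_nonneg hy hx.le]
  have h := one_add_mul_self_le_rpow_one_add hs hp
  rw [add_sub_cancel, div_rpow hy hx.le, le_div_iff₀ (rpow_pos_of_pos hx p)] at h
  have hx1 : x ^ p = x ^ (p - 1) * x := by rw [← rpow_add_one hx.ne', sub_add_cancel]
  have hexp : (1 + p * (y / x - 1)) * x ^ p = x ^ p - p * x ^ (p - 1) * (x - y) := by
    rw [hx1]; field_simp; ring
  linarith

theorem le_rpow_sub_rpow_of_le_one {p x y : ℝ} (hp0 : 0 ≤ p) (hp1 : p ≤ 1) (hx : 0 < x)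
    (hy : 0 ≤ y) : p * x ^ (p - 1) * (x - y) ≤ x ^ p - y ^ p := by
  have hs : -1 ≤ y / x - 1 := by linarith [div_nonneg hy hx.le]
  have h := rpow_one_add_le_one_add_mul_self hs hp0 hp1
  rw [add_sub_cancel, div_rpow hy hx.le, div_le_iff₀ (rpow_pos_of_pos hx p)] at h
  have hx1 : x ^ p = x ^ (p - 1) * x := by rw [← rpow_add_one hx.ne', sub_add_cancel]
  have hexp : (1 + p * (y / x - 1)) * x ^ p = x ^ p - p * x ^ (p - 1) * (x - y) := by
    rw [hx1]; field_simp; ring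
  linarith

end Real

theorem sum_range_succ_rpow_le_of_nonneg {q : ℝ} (hq : 0 ≤ q) (n : ℕ) :
    ∑ i ∈ range n, ((i : ℝ) + 1) ^ q ≤ (n : ℝ) ^ (q + 1) := by
  calc ∑ i ∈ range n, ((i : ℝ) + 1) ^ q ≤ ∑ _i ∈ range n, (n : ℝ) ^ q := by
        refine sum_le_sum fun i hi => rpow_le_rpow (by positivity) ?_ hq
        exact_mod_cast mem_range.1 hi
    _ = (n : ℝ) ^ (q + 1) := by
        rw [sum_const, card_range, nsmul_eq_mul, rpow_add_one' (Nat.cast_nonneg n) (by linarith),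
          mul_comm]

theorem sum_range_succ_rpow_le_of_nonpos {q : ℝ} (hq₁ : -1 < q) (hq₀ : q ≤ 0) (n : ℕ) :
    ∑ i ∈ range n, ((i : ℝ) + 1) ^ q ≤ (q + 1)⁻¹ * (n : ℝ) ^ (q + 1) := by
  have hq : 0 < q + 1 := by linarith
  have step (i : ℕ) :
      ((i : ℝ) + 1) ^ q ≤ (q + 1)⁻¹ * (((i : ℝ) + 1) ^ (q + 1) - (i : ℝ) ^ (q + 1)) := by
    rw [le_inv_mul_iff₀ hq]
    simpa using Real.le_rpow_sub_rpow_of_le_one hq.le (by linarith) (x := (i : ℝ) + 1)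
      (by positivity) (Nat.cast_nonneg i)
  calc ∑ i ∈ range n, ((i : ℝ) + 1) ^ q
      ≤ ∑ i ∈ range n, (q + 1)⁻¹ * (((i : ℝ) + 1) ^ (q + 1) - (i : ℝ) ^ (q + 1)) :=
        sum_le_sum fun i _ => step i
    _ = (q + 1)⁻¹ * (n : ℝ) ^ (q + 1) := by
        have := sum_range_sub (fun i : ℕ => (i : ℝ) ^ (q + 1)) n
        push_cast at this
        rw [← mul_sum, this, zero_rpow hq.ne', sub_zero]

theorem sum_range_succ_div_rpow_le {q : ℝ} (hq : -1 < q) (n : ℕ) :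
    ∑ i ∈ range n, (((i : ℝ) + 1) / n) ^ q ≤ max 1 (q + 1)⁻¹ * n := by
  rcases n.eq_zero_or_pos with rfl | hn
  · simp
  have hn' : (0 : ℝ) < n := by exact_mod_cast hn
  have hsum : ∑ i ∈ range n, ((i : ℝ) + 1) ^ q ≤ max 1 (q + 1)⁻¹ * (n : ℝ) ^ (q + 1) := by
    rcases le_total 0 q with hq₀ | hq₀
    · exact (sum_range_succ_rpow_le_of_nonneg hq₀ n).trans
        (le_mul_of_one_le_left (by positivity) (le_max_left _ _))
    · exact (sum_range_succ_rpow_le_of_nonpos hq hq₀ n).trans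
        (mul_le_mul_of_nonneg_right (le_max_right _ _) (by positivity))
  calc ∑ i ∈ range n, (((i : ℝ) + 1) / n) ^ q
      = (∑ i ∈ range n, ((i : ℝ) + 1) ^ q) / (n : ℝ) ^ q := by
        rw [sum_div]
        exact sum_congr rfl fun i _ => div_rpow (by positivity) hn'.le q
    _ ≤ max 1 (q + 1)⁻¹ * (n : ℝ) ^ (q + 1) / (n : ℝ) ^ q := by gcongr
    _ = max 1 (q + 1)⁻¹ * n := by
        rw [rpow_add_one hn'.ne', mul_div_assoc,
          mul_div_cancel_left₀ _ (rpow_pos_of_pos hn' q).ne']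

theorem rpow_sub_rpow_pow_three_mul_rpow_le {κ x y : ℝ} (hκ : 1 ≤ κ) (hx : 0 < x) (hy : 0 ≤ y)
    (hyx : y ≤ x) (r : ℝ) :
    (x ^ κ - y ^ κ) ^ 3 * x ^ r ≤ κ ^ 3 * (x - y) ^ 3 * x ^ (3 * (κ - 1) + r) := by
  have hinc : 0 ≤ x ^ κ - y ^ κ :=
    sub_nonneg.2 (rpow_le_rpow hy hyx (by linarith))
  calc (x ^ κ - y ^ κ) ^ 3 * x ^ r ≤ (κ * x ^ (κ - 1) * (x - y)) ^ 3 * x ^ r := by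
        gcongr
        exact rpow_sub_rpow_le_of_one_le hκ hx hy
    _ = κ ^ 3 * (x - y) ^ 3 * x ^ (3 * (κ - 1) + r) := by
        rw [rpow_add hx, mul_comm (3 : ℝ), rpow_mul hx.le, rpow_ofNat]; ring

theorem stretched_grid_sum_estimate_general
    (κ β : ℝ) (hβ0 : 0 < β) (hβ1 : β < 1) (hκβ : 2 < κ * (β + 1)) :
    ∃ C : ℝ, ∀ n : ℕ, 1 ≤ n →
      ∑ i ∈ Finset.Ico 1 n,
          ((((i : ℝ) + 1) / n) ^ κ - ((i : ℝ) / n) ^ κ) ^ 3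
            * (((i : ℝ) + 1) / n) ^ (κ * (β - 2))
        ≤ C / n ^ 2 := by
  have hκ : 1 ≤ κ := by nlinarith
  set q := κ * (β + 1) - 3
  have hq : -1 < q := by linarith
  refine ⟨κ ^ 3 * max 1 (q + 1)⁻¹, fun n hn => ?_⟩
  have hn' : (0 : ℝ) < n := by exact_mod_cast hn
  have hterm (i : ℕ) : ((((i : ℝ) + 1) / n) ^ κ - ((i : ℝ) / n) ^ κ) ^ 3
        * (((i : ℝ) + 1) / n) ^ (κ * (β - 2))
      ≤ κ ^ 3 * (1 / n) ^ 3 * (((i : ℝ) + 1) / n) ^ q := by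
    have h := rpow_sub_rpow_pow_three_mul_rpow_le hκ (x := ((i : ℝ) + 1) / n) (y := (i : ℝ) / n)
      (by positivity) (by positivity) (by gcongr; linarith) (κ * (β - 2))
    rwa [← sub_div, add_sub_cancel_left, show 3 * (κ - 1) + κ * (β - 2) = q by ring] at h
  have hrange : Ico 1 n ⊆ range n := range_eq_Ico n ▸ Ico_subset_Ico_left zero_le_one
  calc _ ≤ ∑ i ∈ Ico 1 n, κ ^ 3 * (1 / n) ^ 3 * (((i : ℝ) + 1) / n) ^ q :=
        sum_le_sum fun i _ => hterm i
    _ ≤ ∑ i ∈ range n, κ ^ 3 * (1 / n) ^ 3 * (((i : ℝ) + 1) / n) ^ q :=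
        sum_le_sum_of_subset_of_nonneg hrange fun _ _ _ => by positivity
    _ = κ ^ 3 * (1 / n) ^ 3 * ∑ i ∈ range n, (((i : ℝ) + 1) / n) ^ q := (mul_sum ..).symm
    _ ≤ κ ^ 3 * (1 / n) ^ 3 * (max 1 (q + 1)⁻¹ * n) := by
        gcongr
        exact sum_range_succ_div_rpow_le hq n
    _ = κ ^ 3 * max 1 (q + 1)⁻¹ / n ^ 2 := by field_simp

/-- Deterministic grid-sum estimate for the stretched grid `tᵢⁿ = T + Θ(i/n)^κ`:
if `κ > 0`, `β ∈ (0,1)` and `κ(β+1) > 2`, then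
`Σ_{i=1}^{n−1} [((i+1)/n)^κ − (i/n)^κ]³ ((i+1)/n)^{κ(β−2)} ≤ C/n²` for all `n ≥ 1`. -/
theorem stretched_grid_sum_estimate
    (κ β : ℝ) (hκ : 0 < κ) (hβ0 : 0 < β) (hβ1 : β < 1) (hκβ : 2 < κ * (β + 1)) :
    ∃ C : ℝ, ∀ n : ℕ, 1 ≤ n →
      ∑ i ∈ Finset.Ico 1 n,
          ((((i : ℝ) + 1) / n) ^ κ - ((i : ℝ) / n) ^ κ) ^ 3
            * (((i : ℝ) + 1) / n) ^ (κ * (β - 2))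
        ≤ C / n ^ 2 :=
  stretched_grid_sum_estimate_general κ β hβ0 hβ1 hκβ
end
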